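/- arXiv:0902.0413 — 7 statements merged into one kernel-verified Lean document; each statement's English description precedes it below -/
import Mathlib

section
/- If p is a real polynomial with only real zeros and a is a nonzero real number such that p + a has exactly 2m nonreal zeros (counted with multiplicity), then the polynomial (p')^2 - p·p'' - a·p'' has at least 2m real roots counted with multiplicity. -/
open Polynomial Set
open scoped Classical

/-- Number of nonreal zeros of a real polynomial, counted with multiplicity. -/
noncomputable def ZC (p : Polynomial ℝ) : ℕ :=
  Multiset.card ((p.map (algebraMap ℝ ℂ)).roots.filter fun z => z.im ≠ 0)

/-- Numerator of Q = (p'/p)', namely F = p·p'' − (p')². -/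
noncomputable def Fq (p : Polynomial ℝ) : Polynomial ℝ :=
  p * derivative (derivative p) - (derivative p) ^ 2

/-- The value of Q(z) = (p'(z)/p(z))' = (p p'' − (p')²)/p² at a real point. -/
noncomputable def Qeval (p : Polynomial ℝ) (x : ℝ) : ℝ :=
  ((Fq p).eval x) / (p.eval x) ^ 2

/-- Number of real zeros of Q = (p'/p)' in a set s, counted with multiplicity
(as zeros of the numerator F = p·p'' − (p')², at points where p ≠ 0). -/
noncomputable def ZQ (p : Polynomial ℝ) (s : Set ℝ) : ℕ :=
  Multiset.card ((Fq p).roots.filter fun x => p.eval x ≠ 0 ∧ x ∈ s)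


namespace P133

open Filter Topology

/-- Trichotomy partition of a multiset card. -/
lemma count_tricho (M : Multiset ℝ) (y : ℝ) :
    Multiset.card (M.filter (· < y)) + M.count y + Multiset.card (M.filter (y < ·)) =
      Multiset.card M := by
  induction M using Multiset.induction with
  | empty => simp
  | cons x M ih =>
    rcases lt_trichotomy x y with h | h | h <;>
      first
      | simp only [Multiset.filter_cons, Multiset.count_cons] at *; subst h; simp; omega
      | simp only [Multiset.filter_cons, Multiset.count_cons] at *; simp [h, ne_of_lt h, ne_of_gt h, not_lt_of_gt h, asymm h]; omega

/-- Sum over a finset of counts is at most the card. -/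
lemma sum_count_le (s : Finset ℝ) (M : Multiset ℝ) :
    ∑ x ∈ s, M.count x ≤ Multiset.card M := by
  classical
  calc ∑ x ∈ s, M.count x ≤ ∑ x ∈ s ∪ M.toFinset, M.count x := by
        apply Finset.sum_le_sum_of_subset (Finset.subset_union_left)
    _ = ∑ x ∈ M.toFinset, M.count x := by
        refine (Finset.sum_subset (Finset.subset_union_right) ?_).symm
        intro x _ hx
        simpa [Multiset.count_eq_zero] using fun h => hx (Multiset.mem_toFinset.mpr h)
    _ = Multiset.card M := Multiset.toFinset_sum_count_eq M

/-- Real roots sit inside complex roots. -/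
lemma roots_map_filter_real (r : ℝ[X]) (hr : r ≠ 0) :
    ((r.map (algebraMap ℝ ℂ)).roots.filter fun z => z.im = 0) =
      r.roots.map (algebraMap ℝ ℂ) := by
  have hinj : Function.Injective (algebraMap ℝ ℂ) := (algebraMap ℝ ℂ).injective
  have hmap : r.map (algebraMap ℝ ℂ) ≠ 0 := (Polynomial.map_ne_zero_iff hinj).mpr hr
  ext z
  by_cases hz : z.im = 0
  · have hzre : (algebraMap ℝ ℂ) z.re = z := by
      apply Complex.ext <;> simp [hz]
    rw [Multiset.count_filter, if_pos hz, ← hzre, Multiset.count_map_eq_count' _ _ hinj,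
      count_roots, count_roots, eq_rootMultiplicity_map hinj]
  · rw [Multiset.count_filter, if_neg hz, eq_comm, Multiset.count_eq_zero]
    intro hmem
    obtain ⟨w, -, rfl⟩ := Multiset.mem_map.mp hmem
    simp at hz

/-- Card of real roots + nonreal roots = degree. -/
lemma card_roots_add_ZC (r : ℝ[X]) (hr : r ≠ 0) :
    Multiset.card r.roots +
      Multiset.card ((r.map (algebraMap ℝ ℂ)).roots.filter fun z => z.im ≠ 0) = r.natDegree := by
  have hinj : Function.Injective (algebraMap ℝ ℂ) := (algebraMap ℝ ℂ).injective
  have hmap : r.map (algebraMap ℝ ℂ) ≠ 0 := (Polynomial.map_ne_zero_iff hinj).mpr hr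
  have hsplits : Splits (r.map (algebraMap ℝ ℂ)) := IsAlgClosed.splits _
  have hdeg : r.natDegree = Multiset.card (r.map (algebraMap ℝ ℂ)).roots :=
    by rw [← natDegree_map (algebraMap ℝ ℂ)]; exact hsplits.natDegree_eq_card_roots
  have hpart := Multiset.filter_add_not (fun z : ℂ => z.im = 0) (r.map (algebraMap ℝ ℂ)).roots
  have := congrArg Multiset.card hpart
  rw [Multiset.card_add] at this
  rw [roots_map_filter_real r hr, Multiset.card_map] at this
  rw [hdeg, ← this]


noncomputable def FF' (q : ℝ[X]) : ℝ[X] := derivative q ^ 2 - q * derivative (derivative q)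

variable (q : ℝ[X])

lemma rootMult_q_succ (hq' : derivative q ≠ 0) {y : ℝ} (h1 : q.IsRoot y)
    (h2 : (derivative q).IsRoot y) :
    rootMultiplicity y q = rootMultiplicity y (derivative q) + 1 := by
  have hq : q ≠ 0 := fun h => hq' (by simp [h])
  have hd := derivative_rootMultiplicity_of_root h1
  have h3 : 0 < rootMultiplicity y q := (rootMultiplicity_pos hq).2 h1
  omega

lemma multF_ne (hq' : derivative q ≠ 0) (hF : FF' q ≠ 0) {y : ℝ}
    (h2 : (derivative q).IsRoot y) :
    rootMultiplicity y (derivative q) ≤ rootMultiplicity y (FF' q) + 1 := by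
  set μ := rootMultiplicity y (derivative q) with hμdef
  have hμ : 0 < μ := (rootMultiplicity_pos hq').2 h2
  have key : μ - 1 ≤ rootMultiplicity y (FF' q) := by
    rw [le_rootMultiplicity_iff hF]
    have hd1 : (X - C y) ^ (μ - 1) ∣ derivative q ^ 2 := by
      refine dvd_trans (dvd_trans (pow_dvd_pow _ (Nat.sub_le μ 1)) ?_)
        (dvd_pow_self (derivative q) two_ne_zero)
      exact pow_rootMultiplicity_dvd (derivative q) y
    have hd2 : (X - C y) ^ (μ - 1) ∣ q * derivative (derivative q) := by
      apply Dvd.dvd.mul_left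
      have := derivative_rootMultiplicity_of_root h2
      rw [← hμdef] at this
      rw [← this]
      exact pow_rootMultiplicity_dvd _ y
    exact dvd_sub hd1 hd2
  omega

lemma multF_eq (hq' : derivative q ≠ 0) (hF : FF' q ≠ 0) {y : ℝ}
    (h1 : q.IsRoot y) (h2 : (derivative q).IsRoot y) :
    2 * rootMultiplicity y (derivative q) ≤ rootMultiplicity y (FF' q) := by
  set μ := rootMultiplicity y (derivative q) with hμdef
  have hμ : 0 < μ := (rootMultiplicity_pos hq').2 h2
  rw [le_rootMultiplicity_iff hF]
  have hd1 : (X - C y) ^ (2 * μ) ∣ derivative q ^ 2 := by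
    rw [mul_comm 2 μ, pow_mul]
    exact pow_dvd_pow_of_dvd (pow_rootMultiplicity_dvd (derivative q) y) 2
  have hd2 : (X - C y) ^ (2 * μ) ∣ q * derivative (derivative q) := by
    have e1 : (X - C y) ^ (μ + 1) ∣ q := by
      rw [← rootMult_q_succ q hq' h1 h2]
      exact pow_rootMultiplicity_dvd q y
    have e2 : (X - C y) ^ (μ - 1) ∣ derivative (derivative q) := by
      have := derivative_rootMultiplicity_of_root h2
      rw [← hμdef] at this
      rw [← this]
      exact pow_rootMultiplicity_dvd _ y
    have : (X - C y) ^ (μ + 1) * (X - C y) ^ (μ - 1) ∣ q * derivative (derivative q) :=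
      mul_dvd_mul e1 e2
    rwa [← pow_add, show μ + 1 + (μ - 1) = 2 * μ by omega] at this
  exact dvd_sub hd1 hd2

lemma FF'_ne_zero (hdeg : 0 < q.natDegree) : FF' q ≠ 0 := by
  rcases Nat.lt_or_ge q.natDegree 2 with h2 | h2
  · -- degree 1 case: second derivative vanishes
    have h1 : q.natDegree = 1 := by omega
    have hd' : (derivative q).natDegree = 0 := by
      have := natDegree_derivative_lt (p := q) (by omega)
      omega
    have hq' : derivative q ≠ 0 := by
      have hdeg' := degree_derivative_eq q hdeg
      intro h
      rw [h, degree_zero] at hdeg'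
      exact (by simp : (⊥ : WithBot ℕ) ≠ ((q.natDegree - 1 : ℕ) : WithBot ℕ)) hdeg'
    have hdd : derivative (derivative q) = 0 := by
      rw [eq_C_of_natDegree_eq_zero hd']
      simp
    rw [FF', hdd]
    simpa using pow_ne_zero 2 hq'
  · -- degree ≥ 2: leading coefficient computation
    obtain ⟨k, hk⟩ : ∃ k, q.natDegree = k + 2 := ⟨q.natDegree - 2, by omega⟩
    have hc : q.leadingCoeff ≠ 0 := leadingCoeff_ne_zero.mpr (fun h => by simp [h] at hdeg)
    have hlead : q.leadingCoeff = q.coeff (k + 2) := by rw [leadingCoeff, hk]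
    set n := q.natDegree with hn
    have hd1 : (derivative q).natDegree = k + 1 := by
      have := degree_derivative_eq q hdeg
      have := natDegree_eq_of_degree_eq_some this
      omega
    have hld1 : (derivative q).coeff (k + 1) = q.leadingCoeff * (k + 2) := by
      rw [coeff_derivative]
      rw [show q.coeff (k + 1 + 1) = q.leadingCoeff from hlead.symm]
      push_cast; ring
    have hq'ne : derivative q ≠ 0 := by
      intro h; rw [h, natDegree_zero] at hd1; omega
    have hd2 : (derivative (derivative q)).natDegree = k := by
      have h0 : 0 < (derivative q).natDegree := by omega
      have := degree_derivative_eq (derivative q) h0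
      have := natDegree_eq_of_degree_eq_some this
      omega
    have hld2 : (derivative (derivative q)).coeff k = q.leadingCoeff * (k + 2) * (k + 1) := by
      rw [coeff_derivative, show (derivative q).coeff (k + 1) = q.leadingCoeff * (k+2) from hld1]
      try push_cast
      try ring
    -- coefficient of FF' q at degree 2k+2
    have e1 : (derivative q ^ 2).coeff (2 * k + 2) =
        (q.leadingCoeff * (k + 2)) * (q.leadingCoeff * (k + 2)) := by
      have : derivative q ^ 2 = derivative q * derivative q := sq (derivative q)
      rw [this]
      have := coeff_mul_degree_add_degree (derivative q) (derivative q)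
      rw [hd1] at this
      rw [show 2 * k + 2 = (k+1) + (k+1) by omega, this]
      simp only [leadingCoeff, hd1, hld1]
    have e2 : (q * derivative (derivative q)).coeff (2 * k + 2) =
        q.leadingCoeff * (q.leadingCoeff * (k + 2) * (k + 1)) := by
      have := coeff_mul_degree_add_degree q (derivative (derivative q))
      rw [hd2, ← hn, hk] at this
      rw [show 2 * k + 2 = (k + 2) + k by omega, this]
      simp only [leadingCoeff, hd2, hld2]
      try rw [← hlead.symm, leadingCoeff, hk]
    intro hFF
    have : (FF' q).coeff (2 * k + 2) = 0 := by rw [hFF]; simp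
    rw [FF', coeff_sub, e1, e2] at this
    have hkpos : (0:ℝ) < (k:ℝ) + 2 := by positivity
    nlinarith [sq_nonneg q.leadingCoeff, (by positivity : (0:ℝ) < q.leadingCoeff ^ 2)]


noncomputable def gg (x : ℝ) : ℝ := eval x (derivative q) / eval x q

noncomputable def DD (x : ℝ) : ℝ :=
  (eval x (derivative (derivative q)) * eval x q -
    eval x (derivative q) * eval x (derivative q)) / eval x q ^ 2

lemma hasDerivAt_gg {x : ℝ} (hx : eval x q ≠ 0) : HasDerivAt (gg q) (DD q x) x :=
  ((derivative q).hasDerivAt x).div (q.hasDerivAt x) hx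

lemma FF'_eval_eq {x : ℝ} (hx : eval x q ≠ 0) :
    eval x (FF' q) = -(DD q x) * (eval x q) ^ 2 := by
  rw [FF', DD]
  simp only [eval_sub, eval_mul, eval_pow]
  field_simp
  ring

lemma continuousOn_gg {s : Set ℝ} (hs : ∀ x ∈ s, eval x q ≠ 0) : ContinuousOn (gg q) s :=
  ((derivative q).continuous.continuousOn).div (q.continuous.continuousOn) hs

lemma slope_DD {α β : ℝ} (hαβ : α < β) (hq : ∀ x ∈ Icc α β, eval x q ≠ 0) :
    ∃ c ∈ Ioo α β, DD q c = (gg q β - gg q α) / (β - α) :=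
  exists_hasDerivAt_eq_slope (gg q) (DD q) hαβ (continuousOn_gg q hq)
    (fun x hx => hasDerivAt_gg q (hq x ⟨hx.1.le, hx.2.le⟩))

lemma root_of_sign_change {G : ℝ[X]} {u v : ℝ} (huv : u < v)
    (h : eval u G * eval v G < 0) : ∃ x, x ∈ Ioo u v ∧ eval x G = 0 := by
  rcases mul_neg_iff.mp h with ⟨hu, hv⟩ | ⟨hu, hv⟩
  · have hsub := intermediate_value_Ioo' huv.le (G.continuous.continuousOn (s := Icc u v))
    have h0 : (0:ℝ) ∈ Ioo (eval v G) (eval u G) := ⟨hv, hu⟩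
    obtain ⟨x, hx, hx0⟩ := hsub h0
    exact ⟨x, hx, hx0⟩
  · have hsub := intermediate_value_Ioo huv.le (G.continuous.continuousOn (s := Icc u v))
    have h0 : (0:ℝ) ∈ Ioo (eval u G) (eval v G) := ⟨hu, hv⟩
    obtain ⟨x, hx, hx0⟩ := hsub h0
    exact ⟨x, hx, hx0⟩

lemma sign_pair_root {c₁ c₂ s : ℝ} (h12 : c₁ < c₂) (h1 : 0 < DD q c₁ * s)
    (h2 : DD q c₂ * s < 0) (hc₁ : eval c₁ q ≠ 0) (hc₂ : eval c₂ q ≠ 0) :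
    ∃ x, x ∈ Ioo c₁ c₂ ∧ eval x (FF' q) = 0 := by
  apply root_of_sign_change h12
  rw [FF'_eval_eq q hc₁, FF'_eval_eq q hc₂]
  have hD : DD q c₁ * DD q c₂ < 0 := by
    have hprod : DD q c₁ * s * (DD q c₂ * s) < 0 := mul_neg_of_pos_of_neg h1 h2
    by_contra hcon
    push_neg at hcon
    nlinarith [sq_nonneg s]
  have hq₁ : 0 < eval c₁ q ^ 2 := by positivity
  have hq₂ : 0 < eval c₂ q ^ 2 := by positivity
  nlinarith [mul_pos hq₁ hq₂]

lemma tendsto_gg_atTop (hq0 : q ≠ 0) : Tendsto (gg q) atTop (𝓝 0) :=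
  div_tendsto_zero_of_degree_lt _ _ (degree_derivative_lt hq0)

lemma tendsto_gg_atBot (hq0 : q ≠ 0) : Tendsto (gg q) atBot (𝓝 0) := by
  set Q := q.comp (-X) with hQdef
  have hQ0 : Q ≠ 0 := by
    intro h
    apply hq0
    apply Polynomial.zero_of_eval_zero
    intro x
    have := congrArg (eval (-x)) h
    simpa [hQdef, eval_comp] using this
  have hder : derivative Q = -((derivative q).comp (-X)) := by
    rw [hQdef, derivative_comp]
    simp
  have hG : Tendsto (fun x => eval x (derivative Q) / eval x Q) atTop (𝓝 0) :=
    div_tendsto_zero_of_degree_lt _ _ (degree_derivative_lt hQ0)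
  have comp := hG.comp (tendsto_neg_atBot_atTop : Tendsto (fun x : ℝ => -x) atBot atTop)
  have hneg := comp.neg
  rw [neg_zero] at hneg
  apply Tendsto.congr (f₁ := fun x => -((fun y => eval y (derivative Q) / eval y Q) (-x)))
    ?_ hneg
  intro x
  show -(eval (-x) (derivative Q) / eval (-x) Q) = gg q x
  rw [hder, hQdef]
  simp [gg, eval_comp, neg_div]

lemma sq_pos_of_ne' {s : ℝ} (hs : s ≠ 0) : 0 < s ^ 2 :=
  lt_of_le_of_ne (sq_nonneg s) (Ne.symm (pow_ne_zero 2 hs))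

/-- Piece lemma, both endpoints finite. -/
lemma piece_finite {α β : ℝ} (hαβ : α < β) (hqa : eval α q ≠ 0) (hqb : eval β q ≠ 0)
    (hqi : ∀ x ∈ Ioo α β, eval x q ≠ 0) (hq'i : ∀ x ∈ Ioo α β, eval x (derivative q) ≠ 0)
    (hq'a : eval α (derivative q) = 0) (hq'b : eval β (derivative q) = 0) :
    ∃ x, x ∈ Ioo α β ∧ eval x (FF' q) = 0 := by
  set t₀ := (α + β) / 2 with ht₀def
  have ht₀ : t₀ ∈ Ioo α β := ⟨by rw [ht₀def]; linarith, by rw [ht₀def]; linarith⟩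
  have hicc : ∀ x ∈ Icc α β, eval x q ≠ 0 := by
    intro x hx
    rcases eq_or_lt_of_le hx.1 with h1 | h1
    · rwa [← h1]
    rcases eq_or_lt_of_le hx.2 with h2 | h2
    · rwa [h2]
    · exact hqi x ⟨h1, h2⟩
  set s := gg q t₀ with hs_def
  have hs : s ≠ 0 := div_ne_zero (hq'i _ ht₀) (hqi _ ht₀)
  have hga : gg q α = 0 := by rw [gg, hq'a, zero_div]
  have hgb : gg q β = 0 := by rw [gg, hq'b, zero_div]
  obtain ⟨c₁, hc₁m, hc₁⟩ := slope_DD q ht₀.1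
    (fun x hx => hicc x ⟨hx.1, hx.2.trans ht₀.2.le⟩)
  obtain ⟨c₂, hc₂m, hc₂⟩ := slope_DD q ht₀.2
    (fun x hx => hicc x ⟨ht₀.1.le.trans hx.1, hx.2⟩)
  have h1 : 0 < DD q c₁ * s := by
    have : DD q c₁ * s = s ^ 2 / (t₀ - α) := by rw [hc₁, hga, ← hs_def]; ring
    rw [this]
    exact div_pos (sq_pos_of_ne' hs) (by linarith [ht₀.1])
  have h2 : DD q c₂ * s < 0 := by
    have : DD q c₂ * s = -(s ^ 2 / (β - t₀)) := by rw [hc₂, hgb, ← hs_def]; ring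
    rw [this]
    exact neg_neg_iff_pos.mpr (div_pos (sq_pos_of_ne' hs) (by linarith [ht₀.2]))
  obtain ⟨x, hx, hx0⟩ := sign_pair_root q (hc₁m.2.trans hc₂m.1) h1 h2
    (hqi _ ⟨hc₁m.1, hc₁m.2.trans ht₀.2⟩) (hqi _ ⟨ht₀.1.trans hc₂m.1, hc₂m.2⟩)
  exact ⟨x, ⟨hc₁m.1.trans hx.1, hx.2.trans hc₂m.2⟩, hx0⟩

/-- Piece lemma, left ray. -/
lemma piece_left (hq0 : q ≠ 0) {β : ℝ} (hqb : eval β q ≠ 0)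
    (hqi : ∀ x, x < β → eval x q ≠ 0) (hq'i : ∀ x, x < β → eval x (derivative q) ≠ 0)
    (hq'b : eval β (derivative q) = 0) :
    ∃ x, x < β ∧ eval x (FF' q) = 0 := by
  set t₀ := β - 1 with ht₀def
  have ht₀β : t₀ < β := by rw [ht₀def]; linarith
  set s := gg q t₀ with hs_def
  have hs : s ≠ 0 := div_ne_zero (hq'i _ ht₀β) (hqi _ ht₀β)
  have hgb : gg q β = 0 := by rw [gg, hq'b, zero_div]
  have habs : ∀ᶠ x in atBot, |gg q x| < |s| := by
    have h0 := (tendsto_gg_atBot q hq0).abs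
    rw [abs_zero] at h0
    exact h0.eventually_lt_const (abs_pos.mpr hs)
  obtain ⟨u, hu1, hu2⟩ := (habs.and (eventually_lt_atBot t₀)).exists
  have hqle : ∀ x ∈ Icc u β, eval x q ≠ 0 := by
    intro x hx
    rcases eq_or_lt_of_le hx.2 with h2 | h2
    · rwa [h2]
    · exact hqi x h2
  obtain ⟨c₁, hc₁m, hc₁⟩ := slope_DD q hu2 (fun x hx => hqle x ⟨hx.1, by linarith [hx.2]⟩)
  obtain ⟨c₂, hc₂m, hc₂⟩ := slope_DD q ht₀β (fun x hx => hqle x ⟨by linarith [hu2, hx.1], hx.2⟩)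
  have key : 0 < (s - gg q u) * s := by
    have ha1 : gg q u * s ≤ |gg q u| * |s| :=
      (le_abs_self _).trans (le_of_eq (abs_mul _ _))
    have ha2 : |gg q u| * |s| < |s| * |s| := mul_lt_mul_of_pos_right hu1 (abs_pos.mpr hs)
    have ha3 : |s| * |s| = s * s := abs_mul_abs_self s
    nlinarith
  have h1 : 0 < DD q c₁ * s := by
    have : DD q c₁ * s = (s - gg q u) * s / (t₀ - u) := by rw [hc₁, ← hs_def]; ring
    rw [this]
    exact div_pos key (by linarith)
  have h2 : DD q c₂ * s < 0 := by
    have : DD q c₂ * s = -(s ^ 2 / (β - t₀)) := by rw [hc₂, hgb, ← hs_def]; ring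
    rw [this]
    exact neg_neg_iff_pos.mpr (div_pos (sq_pos_of_ne' hs) (by linarith))
  obtain ⟨x, hx, hx0⟩ := sign_pair_root q (hc₁m.2.trans hc₂m.1) h1 h2
    (hqi _ (by linarith [hc₁m.2, hc₂m.1, hc₂m.2])) (hqi _ hc₂m.2)
  exact ⟨x, by linarith [hx.2, hc₂m.2], hx0⟩

/-- Piece lemma, right ray. -/
lemma piece_right (hq0 : q ≠ 0) {α : ℝ} (hqa : eval α q ≠ 0)
    (hqi : ∀ x, α < x → eval x q ≠ 0) (hq'i : ∀ x, α < x → eval x (derivative q) ≠ 0)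
    (hq'a : eval α (derivative q) = 0) :
    ∃ x, α < x ∧ eval x (FF' q) = 0 := by
  set t₀ := α + 1 with ht₀def
  have ht₀α : α < t₀ := by rw [ht₀def]; linarith
  set s := gg q t₀ with hs_def
  have hs : s ≠ 0 := div_ne_zero (hq'i _ ht₀α) (hqi _ ht₀α)
  have hga : gg q α = 0 := by rw [gg, hq'a, zero_div]
  have habs : ∀ᶠ x in atTop, |gg q x| < |s| := by
    have h0 := (tendsto_gg_atTop q hq0).abs
    rw [abs_zero] at h0
    exact h0.eventually_lt_const (abs_pos.mpr hs)
  obtain ⟨u, hu1, hu2⟩ := (habs.and (eventually_gt_atTop t₀)).exists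
  have hqle : ∀ x ∈ Icc α u, eval x q ≠ 0 := by
    intro x hx
    rcases eq_or_lt_of_le hx.1 with h2 | h2
    · rwa [← h2]
    · exact hqi x h2
  obtain ⟨c₁, hc₁m, hc₁⟩ := slope_DD q ht₀α (fun x hx => hqle x ⟨hx.1, by linarith [hx.2]⟩)
  obtain ⟨c₂, hc₂m, hc₂⟩ := slope_DD q hu2 (fun x hx => hqle x ⟨by linarith [hx.1], hx.2⟩)
  have key : (gg q u - s) * s < 0 := by
    have ha1 : gg q u * s ≤ |gg q u| * |s| :=
      (le_abs_self _).trans (le_of_eq (abs_mul _ _))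
    have ha2 : |gg q u| * |s| < |s| * |s| := mul_lt_mul_of_pos_right hu1 (abs_pos.mpr hs)
    have ha3 : |s| * |s| = s * s := abs_mul_abs_self s
    nlinarith
  have h1 : 0 < DD q c₁ * s := by
    have : DD q c₁ * s = s ^ 2 / (t₀ - α) := by rw [hc₁, hga, ← hs_def]; ring
    rw [this]
    exact div_pos (sq_pos_of_ne' hs) (by linarith)
  have h2 : DD q c₂ * s < 0 := by
    have : DD q c₂ * s = (gg q u - s) * s / (u - t₀) := by rw [hc₂, ← hs_def]; ring
    rw [this]
    exact div_neg_of_neg_of_pos key (by linarith)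
  obtain ⟨x, hx, hx0⟩ := sign_pair_root q (hc₁m.2.trans hc₂m.1) h1 h2
    (hqi _ hc₁m.1) (hqi _ (by linarith [hc₂m.1]))
  exact ⟨x, by linarith [hx.1, hc₁m.1], hx0⟩

lemma count_split (M : Multiset ℝ) {y B : ℝ} (h : y < B) :
    Multiset.card (M.filter (· < B)) =
      Multiset.card (M.filter (· < y)) + M.count y +
        Multiset.card (M.filter fun x => y < x ∧ x < B) := by
  have key := count_tricho (M.filter (· < B)) y
  rw [Multiset.filter_filter, Multiset.filter_filter, Multiset.count_filter, if_pos h] at key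
  rw [← key]
  congr 2
  apply congrArg
  apply Multiset.filter_congr
  intro x _
  constructor
  · rintro ⟨h1, _⟩; exact h1
  · intro h1; exact ⟨h1, h1.trans h⟩

lemma L1_base {q : ℝ[X]} (hq0 : q ≠ 0) (hq'0 : derivative q ≠ 0) (hF0 : FF' q ≠ 0)
    {B : ℝ} (hB : eval B (derivative q) = 0)
    (hempty : ∀ x, eval x (derivative q) = 0 → ¬ x < B) :
    Multiset.card ((derivative q).roots.filter (· < B)) + (if eval B q = 0 then 0 else 1) ≤
      Multiset.card ((FF' q).roots.filter (· < B)) +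
        Multiset.card (q.roots.filter (· < B)) := by
  have hd0 : (derivative q).roots.filter (· < B) = 0 := by
    rw [Multiset.filter_eq_nil]
    intro x hx hlt
    exact hempty x ((mem_roots hq'0).mp hx) hlt
  rw [hd0]
  by_cases hqB : eval B q = 0
  · simp [hqB]
  · rw [if_neg hqB]
    simp only [Multiset.card_zero, zero_add]
    by_cases hroot : ∃ x, x < B ∧ eval x q = 0
    · obtain ⟨x, hx, hx0⟩ := hroot
      have hmem : x ∈ q.roots.filter (· < B) :=
        Multiset.mem_filter.mpr ⟨(mem_roots hq0).mpr hx0, hx⟩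
      have := Multiset.card_pos_iff_exists_mem.mpr ⟨x, hmem⟩
      omega
    · push_neg at hroot
      obtain ⟨x, hx, hx0⟩ := piece_left q hq0 hqB (fun x hx h0 => hroot x hx h0)
        (fun x hx h0 => hempty x h0 hx) hB
      have hmem : x ∈ (FF' q).roots.filter (· < B) :=
        Multiset.mem_filter.mpr ⟨(mem_roots hF0).mpr hx0, hx⟩
      have := Multiset.card_pos_iff_exists_mem.mpr ⟨x, hmem⟩
      omega

lemma L1 {q : ℝ[X]} (hq0 : q ≠ 0) (hq'0 : derivative q ≠ 0) (hF0 : FF' q ≠ 0) :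
    ∀ N : ℕ, ∀ B : ℝ, ((derivative q).roots.toFinset.filter (· < B)).card ≤ N →
      eval B (derivative q) = 0 →
      Multiset.card ((derivative q).roots.filter (· < B)) + (if eval B q = 0 then 0 else 1) ≤
        Multiset.card ((FF' q).roots.filter (· < B)) +
          Multiset.card (q.roots.filter (· < B)) := by
  intro N
  induction N with
  | zero =>
    intro B hcard hB
    apply L1_base hq0 hq'0 hF0 hB
    intro x hx hlt
    have hmem : x ∈ (derivative q).roots.toFinset.filter (· < B) :=
      Finset.mem_filter.mpr ⟨Multiset.mem_toFinset.mpr ((mem_roots hq'0).mpr hx), hlt⟩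
    have := Finset.card_pos.mpr ⟨x, hmem⟩
    omega
  | succ N ih =>
    intro B hcard hB
    rcases Finset.eq_empty_or_nonempty ((derivative q).roots.toFinset.filter (· < B)) with
      hemp | hne
    · apply L1_base hq0 hq'0 hF0 hB
      intro x hx hlt
      have hmem : x ∈ (derivative q).roots.toFinset.filter (· < B) :=
        Finset.mem_filter.mpr ⟨Multiset.mem_toFinset.mpr ((mem_roots hq'0).mpr hx), hlt⟩
      rw [hemp] at hmem
      simp at hmem
    · set Y := (derivative q).roots.toFinset.filter (· < B) with hY
      set y := Y.max' hne with hy_def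
      have hyY : y ∈ Y := Y.max'_mem hne
      have hyroot : eval y (derivative q) = 0 := by
        have h1 := (Finset.mem_filter.mp hyY).1
        rw [Multiset.mem_toFinset, mem_roots hq'0] at h1
        exact h1
      have hyB : y < B := (Finset.mem_filter.mp hyY).2
      have hmax : ∀ x, eval x (derivative q) = 0 → x < B → x ≤ y := fun x hx hxB =>
        Y.le_max' x (Finset.mem_filter.mpr
          ⟨Multiset.mem_toFinset.mpr ((mem_roots hq'0).mpr hx), hxB⟩)
      have hsub : (derivative q).roots.toFinset.filter (· < y) ⊂ Y := by
        constructor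
        · intro x hx
          obtain ⟨hx1, hx2⟩ := Finset.mem_filter.mp hx
          exact Finset.mem_filter.mpr ⟨hx1, hx2.trans hyB⟩
        · intro hcon
          have := hcon hyY
          have := (Finset.mem_filter.mp this).2
          exact lt_irrefl y this
      have hcard' : ((derivative q).roots.toFinset.filter (· < y)).card ≤ N := by
        have := Finset.card_lt_card hsub
        omega
      have IH := ih y hcard' hyroot
      have dsplit := count_split (derivative q).roots hyB
      have fsplit := count_split (FF' q).roots hyB
      have rsplit := count_split q.roots hyB
      have dcount : (derivative q).roots.count y = rootMultiplicity y (derivative q) :=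
        count_roots _
      have fcount : (FF' q).roots.count y = rootMultiplicity y (FF' q) := count_roots _
      have rcount : q.roots.count y = rootMultiplicity y q := count_roots _
      have hμpos : 0 < rootMultiplicity y (derivative q) :=
        (rootMultiplicity_pos hq'0).2 hyroot
      have dmid : (derivative q).roots.filter (fun x => y < x ∧ x < B) = 0 := by
        rw [Multiset.filter_eq_nil]
        rintro x hx ⟨h1, h2⟩
        have := hmax x ((mem_roots hq'0).mp hx) h2
        exact absurd h1 (not_lt.mpr this)
      by_cases hqy : eval y q = 0
      · have h1 : rootMultiplicity y q = rootMultiplicity y (derivative q) + 1 :=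
          rootMult_q_succ q hq'0 hqy hyroot
        have h2 : 2 * rootMultiplicity y (derivative q) ≤ rootMultiplicity y (FF' q) :=
          multF_eq q hq'0 hF0 hqy hyroot
        rw [if_pos hqy] at IH
        have hcB : (if eval B q = 0 then (0:ℕ) else 1) ≤ 1 := by split <;> omega
        rw [dsplit, fsplit, rsplit, dcount, fcount, rcount, dmid, h1]
        simp only [Multiset.card_zero]
        omega
      · have h2 : rootMultiplicity y (derivative q) ≤ rootMultiplicity y (FF' q) + 1 :=
          multF_ne q hq'0 hF0 hyroot
        have county : rootMultiplicity y q = 0 := rootMultiplicity_eq_zero hqy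
        rw [if_neg hqy] at IH
        by_cases hqB : eval B q = 0
        · rw [if_pos hqB, dsplit, fsplit, rsplit, dcount, fcount, rcount, dmid, county]
          simp only [Multiset.card_zero]
          omega
        · rw [if_neg hqB, dsplit, fsplit, rsplit, dcount, fcount, rcount, dmid, county]
          simp only [Multiset.card_zero]
          have hmid : 0 < Multiset.card (q.roots.filter fun x => y < x ∧ x < B) ∨
              0 < Multiset.card ((FF' q).roots.filter fun x => y < x ∧ x < B) := by
            by_cases hqroot : ∃ x, (y < x ∧ x < B) ∧ eval x q = 0
            · obtain ⟨x, hx, hx0⟩ := hqroot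
              left
              exact Multiset.card_pos_iff_exists_mem.mpr
                ⟨x, Multiset.mem_filter.mpr ⟨(mem_roots hq0).mpr hx0, hx⟩⟩
            · push_neg at hqroot
              obtain ⟨x, hx, hx0⟩ := piece_finite q hyB hqy hqB
                (fun x hx h0 => hqroot x ⟨hx.1, hx.2⟩ h0)
                (fun x hx h0 => absurd hx.1 (not_lt.mpr (hmax x h0 hx.2)))
                hyroot hB
              right
              exact Multiset.card_pos_iff_exists_mem.mpr
                ⟨x, Multiset.mem_filter.mpr ⟨(mem_roots hF0).mpr hx0, ⟨hx.1, hx.2⟩⟩⟩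
          omega

/-- Global count: card roots q' + 1 ≤ card roots F + card roots q. -/
lemma main_count {q : ℝ[X]} (hq0 : q ≠ 0) (hq'0 : derivative q ≠ 0) (hF0 : FF' q ≠ 0)
    (hroots : (derivative q).roots ≠ 0) :
    Multiset.card (derivative q).roots + 1 ≤
      Multiset.card ((FF' q).roots) + Multiset.card q.roots := by
  have hne : (derivative q).roots.toFinset.Nonempty := by
    rw [Multiset.toFinset_nonempty]
    exact hroots
  set B := (derivative q).roots.toFinset.max' hne with hB_def
  have hBroot : eval B (derivative q) = 0 := by
    have := (derivative q).roots.toFinset.max'_mem hne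
    rw [Multiset.mem_toFinset, mem_roots hq'0] at this
    exact this
  have hmax : ∀ x, eval x (derivative q) = 0 → x ≤ B := fun x hx =>
    (derivative q).roots.toFinset.le_max' x
      (Multiset.mem_toFinset.mpr ((mem_roots hq'0).mpr hx))
  have L := L1 hq0 hq'0 hF0 ((derivative q).roots.toFinset.filter (· < B)).card B le_rfl hBroot
  have dtri := count_tricho (derivative q).roots B
  have ftri := count_tricho (FF' q).roots B
  have rtri := count_tricho q.roots B
  have dcount : (derivative q).roots.count B = rootMultiplicity B (derivative q) :=
    count_roots _
  have fcount : (FF' q).roots.count B = rootMultiplicity B (FF' q) := count_roots _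
  have rcount : q.roots.count B = rootMultiplicity B q := count_roots _
  have hμpos : 0 < rootMultiplicity B (derivative q) := (rootMultiplicity_pos hq'0).2 hBroot
  have dhigh : (derivative q).roots.filter (B < ·) = 0 := by
    rw [Multiset.filter_eq_nil]
    intro x hx hlt
    exact absurd hlt (not_lt.mpr (hmax x ((mem_roots hq'0).mp hx)))
  rw [dhigh] at dtri
  simp only [Multiset.card_zero] at dtri
  by_cases hqB : eval B q = 0
  · have h1 : rootMultiplicity B q = rootMultiplicity B (derivative q) + 1 :=
      rootMult_q_succ q hq'0 hqB hBroot
    have h2 : 2 * rootMultiplicity B (derivative q) ≤ rootMultiplicity B (FF' q) :=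
      multF_eq q hq'0 hF0 hqB hBroot
    rw [if_pos hqB] at L
    rw [dcount] at dtri
    rw [fcount] at ftri
    rw [rcount, h1] at rtri
    omega
  · have h2 : rootMultiplicity B (derivative q) ≤ rootMultiplicity B (FF' q) + 1 :=
      multF_ne q hq'0 hF0 hBroot
    have county : rootMultiplicity B q = 0 := rootMultiplicity_eq_zero hqB
    rw [if_neg hqB] at L
    rw [dcount] at dtri
    rw [fcount] at ftri
    rw [rcount, county] at rtri
    have hhigh : 0 < Multiset.card (q.roots.filter (B < ·)) ∨
        0 < Multiset.card ((FF' q).roots.filter (B < ·)) := by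
      by_cases hqroot : ∃ x, B < x ∧ eval x q = 0
      · obtain ⟨x, hx, hx0⟩ := hqroot
        left
        exact Multiset.card_pos_iff_exists_mem.mpr
          ⟨x, Multiset.mem_filter.mpr ⟨(mem_roots hq0).mpr hx0, hx⟩⟩
      · push_neg at hqroot
        obtain ⟨x, hx, hx0⟩ := piece_right q hq0 hqB (fun x hx h0 => hqroot x hx h0)
          (fun x hx h0 => absurd hx (not_lt.mpr (hmax x h0))) hBroot
        right
        exact Multiset.card_pos_iff_exists_mem.mpr
          ⟨x, Multiset.mem_filter.mpr ⟨(mem_roots hF0).mpr hx0, hx⟩⟩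
    omega


end P133

open P133

theorem problem133 (p : Polynomial ℝ) (a : ℝ) (ha : a ≠ 0) (m : ℕ)
    (hreal : ZC p = 0) (hm : ZC (p + C a) = 2 * m) :
    2 * m ≤ Multiset.card
      ((p.derivative ^ 2 - p * derivative (derivative p)
        - C a * derivative (derivative p)).roots) := by
  rcases Nat.eq_zero_or_pos m with hm0 | hmpos
  · simp [hm0]
  set q : ℝ[X] := p + C a with hq_def
  have hq0 : q ≠ 0 := by
    intro h
    rw [ZC, h] at hm
    simp at hm
    omega
  have hp1 : 0 < p.natDegree := by
    by_contra hcon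
    push_neg at hcon
    obtain ⟨c, hc⟩ : ∃ c, p = C c := ⟨p.coeff 0, eq_C_of_natDegree_eq_zero (by omega)⟩
    rw [ZC, hq_def, hc, ← C_add, map_C, roots_C] at hm
    simp at hm
    omega
  have hpne : p ≠ 0 := fun h => by simp [h] at hp1
  have hrealcard : Multiset.card ((p.map (algebraMap ℝ ℂ)).roots.filter
      fun z => z.im ≠ 0) = 0 := hreal
  have hcardp : Multiset.card p.roots = p.natDegree := by
    have := card_roots_add_ZC p hpne
    omega
  have hqd : derivative q = derivative p := by rw [hq_def]; simp
  have hnq : q.natDegree = p.natDegree := by rw [hq_def]; exact natDegree_add_C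
  have hm' : Multiset.card ((q.map (algebraMap ℝ ℂ)).roots.filter
      fun z => z.im ≠ 0) = 2 * m := hm
  have hq2m : Multiset.card q.roots + 2 * m = q.natDegree := by
    have := card_roots_add_ZC q hq0
    omega
  have hn2 : 2 ≤ p.natDegree := by omega
  have hcardp' : Multiset.card (derivative p).roots = p.natDegree - 1 := by
    have hub : Multiset.card (derivative p).roots ≤ p.natDegree - 1 := by
      rcases eq_or_ne (derivative p) 0 with h | h
      · simp [h]
      · have h1 := Polynomial.card_roots' (derivative p)
        have h2 := natDegree_derivative_le p
        omega
    have hlb := Polynomial.card_roots_le_derivative p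
    omega
  have hq'0 : derivative q ≠ 0 := by
    rw [hqd]
    intro h
    rw [h] at hcardp'
    simp at hcardp'
    omega
  have hF0 : FF' q ≠ 0 := FF'_ne_zero q (by omega)
  have hroots' : (derivative q).roots ≠ 0 := by
    rw [hqd]
    intro h
    rw [h] at hcardp'
    simp at hcardp'
    omega
  have hmain := main_count hq0 hq'0 hF0 hroots'
  have htarget : p.derivative ^ 2 - p * derivative (derivative p)
      - C a * derivative (derivative p) = FF' q := by
    simp only [FF', hqd, hq_def, derivative_add, derivative_C, add_zero]
    ring
  rw [htarget]
  rw [hqd, hcardp'] at hmain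
  omega
end

section
/- Let p be a real polynomial of degree n ≥ 1 with exactly 2m nonreal zeros (counted with multiplicity). Then the number of extra real zeros of p' equals Z_C(p) - Z_C(p') if n > 2m, and equals Z_C(p) - Z_C(p') - 1 if n = 2m. Here an extra zero of p' is a real zero of p' in an interval strictly between two consecutive real zeros of p beyond the one guaranteed by Rolle's theorem, or any real zero of p' outside the convex hull of the real zeros of p, and Z_C denotes the number of nonreal zeros counted with multiplicity. -/
open Polynomial Set
open scoped Classical

/-- Number of extra real zeros of p': real zeros of p' (with multiplicity) at points
where p ≠ 0, minus one for each gap between consecutive distinct real zeros of p. -/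
noncomputable def extraZeros (p : Polynomial ℝ) : ℕ :=
  Multiset.card ((derivative p).roots.filter fun x => p.eval x ≠ 0)
    - (p.roots.toFinset.card - 1)

/-- Real roots (with multiplicity) plus nonreal roots (with multiplicity) equal the degree. -/
lemma card_roots_add_ZC (q : Polynomial ℝ) (hq : q ≠ 0) :
    Multiset.card q.roots + ZC q = q.natDegree := by
  have hinj : Function.Injective (algebraMap ℝ ℂ) := (algebraMap ℝ ℂ).injective
  have hsplit : Splits (q.map (algebraMap ℝ ℂ)) := IsAlgClosed.splits _
  have hcard : q.natDegree = Multiset.card (q.map (algebraMap ℝ ℂ)).roots :=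
    by rw [← natDegree_map (algebraMap ℝ ℂ)]; exact hsplit.natDegree_eq_card_roots
  have hfilter : (q.map (algebraMap ℝ ℂ)).roots.filter (fun z => ¬ z.im ≠ 0)
      = q.roots.map (fun x => algebraMap ℝ ℂ x) := by
    ext z
    rw [Multiset.count_filter]
    by_cases hz : z.im = 0
    · have hz' : algebraMap ℝ ℂ z.re = z := Complex.ext (by simp) (by simp [hz])
      rw [if_pos (by simp [hz])]
      rw [← hz', Multiset.count_map_eq_count' _ _ hinj,
        count_roots, count_roots, eq_rootMultiplicity_map hinj]
    · rw [if_neg (by simpa using hz), eq_comm, Multiset.count_eq_zero]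
      intro hmem
      obtain ⟨x, _, hx⟩ := Multiset.mem_map.mp hmem
      apply hz
      rw [← hx]
      simp
  have := Multiset.filter_add_not (fun z => z.im ≠ 0) (q.map (algebraMap ℝ ℂ)).roots
  have hc := congrArg Multiset.card this
  rw [Multiset.card_add, hfilter, Multiset.card_map] at hc
  rw [ZC, hcard, ← hc, Nat.add_comm]

/-- The roots of p' located at roots of p, as a multiset. -/
lemma filter_deriv_roots (p : Polynomial ℝ) (hp : p ≠ 0) :
    (derivative p).roots.filter (fun x => ¬ p.eval x ≠ 0) = p.roots - p.roots.dedup := by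
  ext a
  rw [Multiset.count_filter, Multiset.count_sub, Multiset.count_dedup]
  by_cases h : p.eval a = 0
  · have ha : a ∈ p.roots := mem_roots'.mpr ⟨hp, h⟩
    rw [if_pos (by simp [h]), if_pos ha, count_roots, count_roots,
      derivative_rootMultiplicity_of_root h]
  · have ha : a ∉ p.roots := fun hmem => h (mem_roots'.mp hmem).2
    rw [if_neg (by simpa using h), if_neg ha, eq_comm, Nat.sub_zero,
      Multiset.count_eq_zero]
    exact ha

theorem extraZeros_of_polynomial (p : Polynomial ℝ) (m : ℕ)
    (hdeg : 1 ≤ p.natDegree) (hm : ZC p = 2 * m) :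
    (p.natDegree > 2 * m → extraZeros p = ZC p - ZC (derivative p)) ∧
    (p.natDegree = 2 * m → extraZeros p = ZC p - ZC (derivative p) - 1) := by
  have hp : p ≠ 0 := fun h => by simp [h] at hdeg
  have hdp : (derivative p).degree = ((p.natDegree - 1 : ℕ) : WithBot ℕ) :=
    degree_derivative_eq p hdeg
  have hp' : derivative p ≠ 0 := by
    intro h
    rw [h, degree_zero] at hdp
    exact absurd hdp.symm (by simp)
  have hnd : (derivative p).natDegree = p.natDegree - 1 := natDegree_eq_of_degree_eq_some hdp
  have h1 := card_roots_add_ZC p hp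
  have h2 := card_roots_add_ZC (derivative p) hp'
  have hAB : Multiset.card ((derivative p).roots.filter fun x => p.eval x ≠ 0)
      + Multiset.card ((derivative p).roots.filter fun x => ¬ p.eval x ≠ 0)
      = Multiset.card (derivative p).roots := by
    rw [← Multiset.card_add, Multiset.filter_add_not]
  rw [filter_deriv_roots p hp] at hAB
  have hded : p.roots.dedup ≤ p.roots := Multiset.dedup_le _
  have hcard_sub : Multiset.card (p.roots - p.roots.dedup)
      = Multiset.card p.roots - Multiset.card p.roots.dedup := Multiset.card_sub hded
  have hk : p.roots.toFinset.card = Multiset.card p.roots.dedup := Multiset.card_toFinset _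
  have hkle : Multiset.card p.roots.dedup ≤ Multiset.card p.roots :=
    Multiset.card_le_card hded
  have hk0 : Multiset.card p.roots.dedup = 0 ↔ Multiset.card p.roots = 0 := by
    rw [Multiset.card_eq_zero, Multiset.card_eq_zero, Multiset.dedup_eq_zero]
  rw [hnd] at h2
  constructor <;> intro hcase <;> simp only [extraZeros, hk] <;> omega
end

section
/- Let p be a real polynomial with at least one real zero and 2m nonreal zeros counted with multiplicity. Then Z_C(p) ≤ E(p') + Z_C(p') ≤ Z_C(p) + 2, where Z_C denotes the number of nonreal zeros counted with multiplicity and E(p') is the number of extra real zeros of p'. -/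
open Polynomial Set
open scoped Classical

lemma filter_im_eq_zero (q : Polynomial ℝ) :
    Multiset.filter (fun z => ¬ z.im ≠ 0) ((q.map (algebraMap ℝ ℂ)).roots)
      = q.roots.map (fun x : ℝ => (x : ℂ)) := by
  have hinj : Function.Injective (fun x : ℝ => (x : ℂ)) := Complex.ofReal_injective
  ext z
  by_cases hz : z.im = 0
  · have hzre : ((z.re : ℂ)) = z := by
      apply Complex.ext <;> simp [hz]
    rw [Multiset.count_filter, if_pos (by simp [hz])]
    calc Multiset.count z (q.map (algebraMap ℝ ℂ)).roots
        = rootMultiplicity z (q.map (algebraMap ℝ ℂ)) := count_roots _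
      _ = rootMultiplicity ((algebraMap ℝ ℂ) z.re) (q.map (algebraMap ℝ ℂ)) := by
          congr 1
          simpa using hzre.symm
      _ = rootMultiplicity z.re q := (eq_rootMultiplicity_map (algebraMap ℝ ℂ).injective z.re).symm
      _ = Multiset.count z.re q.roots := (count_roots q).symm
      _ = Multiset.count ((fun x : ℝ => (x : ℂ)) z.re) (q.roots.map (fun x : ℝ => (x : ℂ))) :=
          (Multiset.count_map_eq_count' _ _ hinj _).symm
      _ = Multiset.count z (q.roots.map (fun x : ℝ => (x : ℂ))) :=
          congrArg (fun w => Multiset.count w (q.roots.map (fun x : ℝ => (x : ℂ)))) hzre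
  · rw [Multiset.count_filter, if_neg (by simp [hz]), eq_comm]
    rw [Multiset.count_eq_zero]
    intro hmem
    obtain ⟨x, -, rfl⟩ := Multiset.mem_map.mp hmem
    exact hz (by simp)

lemma ZC_add_card_roots (q : Polynomial ℝ) (_hq : q ≠ 0) :
    ZC q + Multiset.card q.roots = q.natDegree := by
  have htot : q.natDegree = Multiset.card ((q.map (algebraMap ℝ ℂ)).roots) :=
    by rw [← natDegree_map (algebraMap ℝ ℂ)]; exact (IsAlgClosed.splits _).natDegree_eq_card_roots
  have hsplit := Multiset.filter_add_not (fun z : ℂ => z.im ≠ 0) ((q.map (algebraMap ℝ ℂ)).roots)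
  have hcard := congrArg Multiset.card hsplit
  rw [Multiset.card_add, filter_im_eq_zero q, Multiset.card_map] at hcard
  rw [ZC, htot, ← hcard]

theorem extraZeros_bounds (p : Polynomial ℝ) (hp : p ≠ 0)
    (hroot : ∃ x : ℝ, p.IsRoot x) (m : ℕ) (hm : ZC p = 2 * m) :
    ZC p ≤ extraZeros p + ZC (derivative p) ∧
    extraZeros p + ZC (derivative p) ≤ ZC p + 2 := by
  classical
  obtain ⟨x₀, hx₀⟩ := hroot
  have hdegpos : 0 < p.degree := degree_pos_of_root hp hx₀
  have hn : 0 < p.natDegree := natDegree_pos_iff_degree_pos.mpr hdegpos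
  have hp' : derivative p ≠ 0 := by
    intro h
    exact hn.ne' (natDegree_eq_zero_of_derivative_eq_zero h)
  set n := p.natDegree with hn_def
  set r := Multiset.card p.roots with hr_def
  set S := p.roots.toFinset with hS_def
  set k := S.card with hk_def
  set A := Multiset.card ((derivative p).roots.filter fun x => p.eval x ≠ 0) with hA_def
  set B := Multiset.card ((derivative p).roots.filter fun x => ¬ p.eval x ≠ 0) with hB_def
  have hSmem : ∀ x, x ∈ S ↔ p.IsRoot x := by
    intro x
    rw [hS_def, Multiset.mem_toFinset, mem_roots hp]
  -- natDegree of derivative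
  have hnd : (derivative p).natDegree + 1 = n := by
    have hle : (derivative p).natDegree ≤ n - 1 := natDegree_derivative_le p
    have hge : n - 1 ≤ (derivative p).natDegree := by
      apply le_natDegree_of_ne_zero
      rw [coeff_derivative]
      apply mul_ne_zero
      · rw [Nat.sub_add_cancel hn]
        exact leadingCoeff_ne_zero.mpr hp
      · have : ((n - 1 : ℕ) : ℝ) + 1 ≠ 0 := by positivity
        exact this
    omega
  have h1 : ZC p + r = n := ZC_add_card_roots p hp
  have h2 : ZC (derivative p) + Multiset.card (derivative p).roots = (derivative p).natDegree :=
    ZC_add_card_roots _ hp'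
  have h3 : Multiset.card (derivative p).roots = B + A := by
    have := congrArg Multiset.card
      (Multiset.filter_add_not (fun x : ℝ => ¬ p.eval x ≠ 0) (derivative p).roots)
    rw [Multiset.card_add] at this
    have hA' : Multiset.filter (fun a => ¬¬p.eval a ≠ 0) (derivative p).roots
        = Multiset.filter (fun a => p.eval a ≠ 0) (derivative p).roots := by
      apply Multiset.filter_congr
      intro x _
      tauto
    rw [hA'] at this
    rw [← this, hB_def, hA_def]
  -- B + k = r
  have h4 : B + k = r := by
    have hsub : ((derivative p).roots.filter fun x => ¬ p.eval x ≠ 0).toFinset ⊆ S := by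
      intro x hx
      rw [Multiset.mem_toFinset, Multiset.mem_filter] at hx
      rw [hSmem]
      exact not_not.mp hx.2
    have hBsum : B = ∑ x ∈ S, Multiset.count x ((derivative p).roots.filter fun x => ¬ p.eval x ≠ 0) := by
      rw [hB_def, ← Multiset.toFinset_sum_count_eq]
      apply Finset.sum_subset hsub
      intro x _ hx
      exact Multiset.count_eq_zero_of_notMem (by simpa [Multiset.mem_toFinset] using hx)
    have hBsum2 : B = ∑ x ∈ S, (rootMultiplicity x p - 1) := by
      rw [hBsum]
      apply Finset.sum_congr rfl
      intro x hx
      have hxr : p.IsRoot x := (hSmem x).mp hx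
      rw [Multiset.count_filter, if_pos (by simp [hxr.eq_zero]), count_roots,
        derivative_rootMultiplicity_of_root hxr]
    have hrsum : r = ∑ x ∈ S, rootMultiplicity x p := by
      rw [hr_def, hS_def, ← Multiset.toFinset_sum_count_eq]
      apply Finset.sum_congr rfl
      intro x _
      rw [count_roots]
    rw [hBsum2, hrsum, hk_def, Finset.card_eq_sum_ones, ← Finset.sum_add_distrib]
    apply Finset.sum_congr rfl
    intro x hx
    have : 1 ≤ rootMultiplicity x p := (rootMultiplicity_pos hp).mpr ((hSmem x).mp hx)
    omega
  -- Rolle: k ≤ A + 1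
  have h6 : 1 ≤ k := Finset.card_pos.mpr ⟨x₀, (hSmem x₀).mpr hx₀⟩
  have h5 : k ≤ A + 1 := by
    set T := ((derivative p).roots.filter fun x => p.eval x ≠ 0).toFinset with hT_def
    have hSne : S.Nonempty := ⟨x₀, (hSmem x₀).mpr hx₀⟩
    set M := S.max' hSne with hM_def
    have key : ∀ x ∈ S.erase M, ∃ c, c ∈ T ∧ x < c ∧ ∀ y ∈ S, x < y → c < y := by
      intro x hx
      obtain ⟨hxM, hxS⟩ := Finset.mem_erase.mp hx
      have hxltM : x < M := lt_of_le_of_ne (S.le_max' x hxS) hxM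
      set G := S.filter (fun y => x < y) with hG_def
      have hGne : G.Nonempty := ⟨M, Finset.mem_filter.mpr ⟨S.max'_mem hSne, hxltM⟩⟩
      set b := G.min' hGne with hb_def
      have hbG : b ∈ G := G.min'_mem hGne
      obtain ⟨hbS, hxb⟩ := Finset.mem_filter.mp hbG
      have hnoroot : ∀ y ∈ Set.Ioo x b, ¬ p.IsRoot y := by
        intro y hy hyr
        have hyG : y ∈ G := Finset.mem_filter.mpr ⟨(hSmem y).mpr hyr, hy.1⟩
        exact absurd (G.min'_le y hyG) (not_le.mpr hy.2)
      have hcont : ContinuousOn (fun t => p.eval t) (Set.Icc x b) :=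
        (p.continuous_aeval).continuousOn
      have hval : p.eval x = p.eval b := by
        rw [((hSmem x).mp hxS).eq_zero, ((hSmem b).mp hbS).eq_zero]
      obtain ⟨c, hcI, hc0⟩ := exists_deriv_eq_zero hxb hcont hval
      rw [Polynomial.deriv] at hc0
      have hpc : p.eval c ≠ 0 := fun h => hnoroot c hcI h
      refine ⟨c, ?_, hcI.1, ?_⟩
      · rw [hT_def, Multiset.mem_toFinset, Multiset.mem_filter, mem_roots hp']
        exact ⟨hc0, hpc⟩
      · intro y hyS hxy
        have hyG : y ∈ G := Finset.mem_filter.mpr ⟨hyS, hxy⟩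
        exact lt_of_lt_of_le hcI.2 (G.min'_le y hyG)
    choose f hfT hflt hfub using key
    have hcard : (S.erase M).card ≤ T.card := by
      apply Finset.card_le_card_of_injOn (fun x => if hx : x ∈ S.erase M then f x hx else 0)
      · intro x hx
        simp only [Finset.mem_coe] at hx ⊢
        rw [dif_pos hx]
        exact hfT x hx
      · intro x hx y hy hfxy
        simp only [Finset.mem_coe] at hx hy
        have hfxy' : f x hx = f y hy := by
          dsimp only at hfxy
          rwa [dif_pos hx, dif_pos hy] at hfxy
        by_contra hne
        rcases lt_trichotomy x y with h | h | h
        · have h1' : f x hx < y := hfub x hx y (Finset.mem_of_mem_erase hy) h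
          have h2' : y < f y hy := hflt y hy
          rw [hfxy'] at h1'
          exact absurd h1' (not_lt.mpr h2'.le)
        · exact hne h
        · have h1' : f y hy < x := hfub y hy x (Finset.mem_of_mem_erase hx) h
          have h2' : x < f x hx := hflt x hx
          rw [hfxy'] at h2'
          exact absurd h2' (not_lt.mpr h1'.le)
    have hTA : T.card ≤ A := Multiset.toFinset_card_le _
    have : (S.erase M).card = k - 1 := by
      rw [Finset.card_erase_of_mem (S.max'_mem hSne), hk_def]
    omega
  have hE : extraZeros p = A - (k - 1) := rfl
  constructor <;> omega
end

section
/- Let p be a real polynomial, β1 < β2 real zeros of p', and suppose p has a unique real zero α in (β1, β2) with p'(z) ≠ 0 for z ∈ (β1, α) ∪ (α, β2). Then Q(z) = (p'(z)/p(z))' has an even number of zeros, counted with multiplicity, in each of the intervals (β1, α) and (α, β2). -/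
open Polynomial Set
open scoped Classical

lemma sign_const {f : ℝ → ℝ} (hf : Continuous f) {a b : ℝ}
    (h0 : ∀ x ∈ Ioo a b, f x ≠ 0) {x y : ℝ} (hx : x ∈ Ioo a b) (hy : y ∈ Ioo a b) :
    0 < f x * f y := by
  have key : ∀ u v : ℝ, u ∈ Ioo a b → v ∈ Ioo a b → u < v → f u * f v < 0 → False := by
    intro u v hu hv huv hneg
    rcases mul_neg_iff.1 hneg with ⟨h1, h2⟩ | ⟨h1, h2⟩
    · obtain ⟨z, hz, hfz⟩ := intermediate_value_Ioo' huv.le hf.continuousOn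
        (show (0:ℝ) ∈ Ioo (f v) (f u) from ⟨h2, h1⟩)
      exact h0 z ⟨lt_trans hu.1 hz.1, lt_trans hz.2 hv.2⟩ hfz
    · obtain ⟨z, hz, hfz⟩ := intermediate_value_Ioo huv.le hf.continuousOn
        (show (0:ℝ) ∈ Ioo (f u) (f v) from ⟨h1, h2⟩)
      exact h0 z ⟨lt_trans hu.1 hz.1, lt_trans hz.2 hv.2⟩ hfz
  rcases lt_trichotomy (f x * f y) 0 with h | h | h
  · exfalso
    rcases lt_trichotomy x y with hxy | rfl | hxy
    · exact key x y hx hy hxy h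
    · nlinarith [h0 x hx, sq_nonneg (f x)]
    · exact key y x hy hx hxy (by linarith [mul_comm (f x) (f y)])
  · exact absurd h (mul_ne_zero (h0 x hx) (h0 y hy))
  · exact h

lemma parity_aux : ∀ (n : ℕ) (F : Polynomial ℝ) (a b : ℝ), a < b → F.eval a ≠ 0 → F.eval b ≠ 0 →
    Multiset.card (F.roots.filter fun x => x ∈ Ioo a b) = n →
    (Even n ↔ 0 < F.eval a * F.eval b) := by
  intro n
  induction n with
  | zero =>
    intro F a b hab ha hb hcard
    have hF : F ≠ 0 := fun h => ha (by simp [h])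
    simp only [Even.zero, true_iff]
    rcases lt_trichotomy (F.eval a * F.eval b) 0 with h | h | h
    · exfalso
      have hz : ∃ z ∈ Ioo a b, F.eval z = 0 := by
        rcases mul_neg_iff.1 h with ⟨h1, h2⟩ | ⟨h1, h2⟩
        · obtain ⟨z, hz, hfz⟩ := intermediate_value_Ioo' hab.le F.continuousOn_aeval
            (show (0:ℝ) ∈ Ioo (F.eval b) (F.eval a) from ⟨h2, h1⟩)
          exact ⟨z, hz, hfz⟩
        · obtain ⟨z, hz, hfz⟩ := intermediate_value_Ioo hab.le F.continuousOn_aeval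
            (show (0:ℝ) ∈ Ioo (F.eval a) (F.eval b) from ⟨h1, h2⟩)
          exact ⟨z, hz, hfz⟩
      obtain ⟨z, hzI, hz0⟩ := hz
      have : z ∈ Multiset.filter (fun x => x ∈ Ioo a b) F.roots :=
        Multiset.mem_filter.2 ⟨mem_roots'.2 ⟨hF, hz0⟩, hzI⟩
      rw [Multiset.card_eq_zero.1 hcard] at this
      exact Multiset.notMem_zero z this
    · exact absurd h (mul_ne_zero ha hb)
    · exact h
  | succ n ih =>
    intro F a b hab ha hb hcard
    have hF : F ≠ 0 := fun h => ha (by simp [h])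
    have hpos : 0 < Multiset.card (F.roots.filter fun x => x ∈ Ioo a b) := by
      rw [hcard]; exact n.succ_pos
    obtain ⟨r, hr⟩ := Multiset.card_pos_iff_exists_mem.1 hpos
    rw [Multiset.mem_filter] at hr
    obtain ⟨hroot, hrIoo⟩ := hr
    have hrIsRoot : F.IsRoot r := (mem_roots'.1 hroot).2
    set G := F /ₘ (X - C r) with hGdef
    have hfac : (X - C r) * G = F := mul_divByMonic_eq_iff_isRoot.2 hrIsRoot
    have hG : G ≠ 0 := by
      intro h; rw [h, mul_zero] at hfac; exact hF hfac.symm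
    have hFa : F.eval a = (a - r) * G.eval a := by rw [← hfac]; simp
    have hFb : F.eval b = (b - r) * G.eval b := by rw [← hfac]; simp
    have hGa : G.eval a ≠ 0 := fun h => ha (by rw [hFa, h, mul_zero])
    have hGb : G.eval b ≠ 0 := fun h => hb (by rw [hFb, h, mul_zero])
    have har : a - r < 0 := sub_neg.2 hrIoo.1
    have hbr : 0 < b - r := sub_pos.2 hrIoo.2
    have hroots : F.roots = r ::ₘ G.roots := by
      rw [← hfac, roots_mul (hfac.symm ▸ hF), roots_X_sub_C]
      simp
    have hcardG : Multiset.card (G.roots.filter fun x => x ∈ Ioo a b) = n := by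
      have : Multiset.filter (fun x => x ∈ Ioo a b) F.roots
          = r ::ₘ Multiset.filter (fun x => x ∈ Ioo a b) G.roots := by
        rw [hroots, Multiset.filter_cons_of_pos _ hrIoo]
      rw [this] at hcard
      simpa using hcard
    rw [Nat.even_add_one, ih G a b hab hGa hGb hcardG, hFa, hFb]
    constructor
    · intro h
      push_neg at h
      have h' : G.eval a * G.eval b < 0 :=
        lt_of_le_of_ne h (mul_ne_zero hGa hGb)
      have key := mul_pos_of_neg_of_neg (mul_neg_of_neg_of_pos har hbr) h'
      nlinarith [key]
    · intro h hcon
      have key := mul_neg_of_neg_of_pos (mul_neg_of_neg_of_pos har hbr) hcon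
      nlinarith [key]

lemma even_card (F : Polynomial ℝ) (a b : ℝ) (hab : a < b)
    (ha : ∀ ε > (0:ℝ), ∃ x ∈ Ioo a b, x < a + ε ∧ F.eval x < 0)
    (hb : ∀ ε > (0:ℝ), ∃ y ∈ Ioo a b, b - ε < y ∧ F.eval y < 0) :
    Even (Multiset.card (F.roots.filter fun x => x ∈ Ioo a b)) := by
  classical
  by_cases hS0 : (F.roots.filter fun x => x ∈ Ioo a b) = 0
  · rw [hS0]; simp
  · have hone : (F.roots.filter fun x => x ∈ Ioo a b).toFinset.Nonempty := by
      rwa [Multiset.toFinset_nonempty]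
    set S := (F.roots.filter fun x => x ∈ Ioo a b) with hSdef
    set m := S.toFinset.min' hone with hmdef
    set M := S.toFinset.max' hone with hMdef
    have hmS : m ∈ S := Multiset.mem_toFinset.1 (S.toFinset.min'_mem hone)
    have hMS : M ∈ S := Multiset.mem_toFinset.1 (S.toFinset.max'_mem hone)
    have hm : m ∈ Ioo a b := (Multiset.mem_filter.1 hmS).2
    have hM : M ∈ Ioo a b := (Multiset.mem_filter.1 hMS).2
    have hmM : m ≤ M := S.toFinset.min'_le _ (Multiset.mem_toFinset.2 hMS)
    obtain ⟨x, hx, hxm, hxneg⟩ := ha (m - a) (sub_pos.2 hm.1)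
    obtain ⟨y, hy, hyM, hyneg⟩ := hb (b - M) (sub_pos.2 hM.2)
    have hxm' : x < m := by linarith
    have hyM' : M < y := by linarith
    have hxy : x < y := by linarith
    have hfilt : S = F.roots.filter fun z => z ∈ Ioo x y := by
      rw [hSdef]
      apply Multiset.filter_congr
      intro z hz
      constructor
      · intro hzab
        have hzS : z ∈ S := Multiset.mem_filter.2 ⟨hz, hzab⟩
        have h1 : m ≤ z := S.toFinset.min'_le _ (Multiset.mem_toFinset.2 hzS)
        have h2 : z ≤ M := S.toFinset.le_max' _ (Multiset.mem_toFinset.2 hzS)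
        exact ⟨by linarith, by linarith⟩
      · intro hzxy
        exact ⟨by linarith [hx.1, hzxy.1], by linarith [hy.2, hzxy.2]⟩
    rw [hfilt]
    exact (parity_aux _ F x y hxy hxneg.ne hyneg.ne rfl).2
      (mul_pos_of_neg_of_neg hxneg hyneg)

lemma neg_point (p : Polynomial ℝ) {c d : ℝ} (hcd : c < d)
    (hp : ∀ x ∈ Icc c d, p.eval x ≠ 0)
    (hg : (derivative p).eval d / p.eval d < (derivative p).eval c / p.eval c) :
    ∃ ξ ∈ Ioo c d, (Fq p).eval ξ < 0 := by
  have hcont : ContinuousOn (fun x => (derivative p).eval x / p.eval x) (Icc c d) :=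
    ((derivative p).continuousOn_aeval).div (p.continuousOn_aeval) hp
  have hderiv : ∀ x ∈ Ioo c d, HasDerivAt (fun x => (derivative p).eval x / p.eval x)
      ((Fq p).eval x / (p.eval x) ^ 2) x := by
    intro x hx
    have hpx := hp x (Ioo_subset_Icc_self hx)
    have h1 := ((derivative p).hasDerivAt x).div (p.hasDerivAt x) hpx
    exact h1.congr_deriv (by simp only [Fq, eval_sub, eval_mul, eval_pow]; ring)
  obtain ⟨ξ, hξ, heq⟩ := exists_hasDerivAt_eq_slope _ _ hcd hcont hderiv
  refine ⟨ξ, hξ, ?_⟩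
  have hpξ := hp ξ (Ioo_subset_Icc_self hξ)
  have hslope : ((derivative p).eval d / p.eval d - (derivative p).eval c / p.eval c) / (d - c)
      < 0 := div_neg_of_neg_of_pos (by linarith) (by linarith)
  rw [← heq] at hslope
  have hsq : 0 < p.eval ξ ^ 2 := by positivity
  by_contra hcon
  push_neg at hcon
  exact absurd (div_nonneg hcon hsq.le) (not_le.2 hslope)

lemma local_behavior (p : Polynomial ℝ) (hp : p ≠ 0) {α : ℝ} (hα : p.IsRoot α) :
    ∃ δ > (0:ℝ), ∀ x : ℝ, x ≠ α → |x - α| < δ →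
      p.eval x ≠ 0 ∧ (1:ℝ)/2 ≤ ((derivative p).eval x / p.eval x) * (x - α) := by
  set M := p.rootMultiplicity α with hMdef
  have hM1 : 1 ≤ M := (rootMultiplicity_pos hp).2 hα
  obtain ⟨m, hMeq⟩ : ∃ m, M = m + 1 := ⟨M - 1, (Nat.succ_pred_eq_of_pos hM1).symm⟩
  set u := p /ₘ (X - C α) ^ M with hudef
  have huα : u.eval α ≠ 0 := eval_divByMonic_pow_rootMultiplicity_ne_zero α hp
  have hfac : (X - C α) ^ M * u = p := pow_mul_divByMonic_rootMultiplicity_eq p α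
  set h : ℝ → ℝ := fun x =>
    ((M : ℝ) * u.eval x + (x - α) * (derivative u).eval x) / u.eval x with hhdef
  have hcont : ContinuousAt h α := by
    apply ContinuousAt.div _ (u.continuous_aeval).continuousAt huα
    fun_prop
  have hval : h α = (M : ℝ) := by
    simp only [hhdef, sub_self, zero_mul, add_zero]
    field_simp
  have hMhalf : (1:ℝ)/2 < h α := by
    rw [hval]
    have : (1:ℝ) ≤ (M:ℝ) := by exact_mod_cast hM1
    linarith
  obtain ⟨δ, hδpos, hδ⟩ := Metric.continuousAt_iff.1 hcont ((h α) - 1/2) (by linarith)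
  refine ⟨δ, hδpos, ?_⟩
  intro x hxα hxd
  have hdist : dist x α < δ := by rwa [Real.dist_eq]
  have hhx : 1/2 < h x := by
    have := hδ hdist
    rw [Real.dist_eq] at this
    have := abs_lt.1 this
    linarith [this.1]
  have hux : u.eval x ≠ 0 := by
    intro h0
    rw [hhdef] at hhx
    simp only [h0, div_zero] at hhx
    linarith
  have hsub : x - α ≠ 0 := sub_ne_zero.2 hxα
  have hpx : p.eval x = (x - α) ^ M * u.eval x := by rw [← hfac]; simp
  have hpx0 : p.eval x ≠ 0 := by
    rw [hpx]; exact mul_ne_zero (pow_ne_zero _ hsub) hux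
  have hp'x : (derivative p).eval x
      = (M : ℝ) * (x - α) ^ (M - 1) * u.eval x + (x - α) ^ M * (derivative u).eval x := by
    conv_lhs => rw [← hfac]
    rw [derivative_mul, derivative_pow, derivative_X_sub_C, mul_one]
    simp
  refine ⟨hpx0, ?_⟩
  have hkey : ((derivative p).eval x / p.eval x) * (x - α) = h x := by
    rw [hp'x, hpx, hhdef]
    rw [hMeq]
    simp only [Nat.add_sub_cancel, pow_succ]
    field_simp
  rw [hkey]
  linarith

theorem Q_even_around_zero_of_p (p : Polynomial ℝ) (β1 β2 α : ℝ)
    (h1 : (derivative p).IsRoot β1) (h2 : (derivative p).IsRoot β2)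
    (hα1 : β1 < α) (hα2 : α < β2) (hα : p.IsRoot α)
    (huniq : ∀ z ∈ Set.Ioo β1 β2, p.IsRoot z → z = α)
    (hder : ∀ z ∈ Set.Ioo β1 α ∪ Set.Ioo α β2, (derivative p).eval z ≠ 0) :
    Even (ZQ p (Set.Ioo β1 α)) ∧ Even (ZQ p (Set.Ioo α β2)) := by
  classical
  have hp0 : p ≠ 0 := by
    intro h
    apply hder ((β1 + α)/2) (Or.inl ⟨by linarith, by linarith⟩)
    rw [h]; simp
  have pL : ∀ z ∈ Ioo β1 α, p.eval z ≠ 0 := by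
    intro z hz h0
    exact absurd (huniq z ⟨hz.1, lt_trans hz.2 hα2⟩ h0) (ne_of_lt hz.2)
  have pR : ∀ z ∈ Ioo α β2, p.eval z ≠ 0 := by
    intro z hz h0
    exact absurd (huniq z ⟨lt_trans hα1 hz.1, hz.2⟩ h0) (ne_of_gt hz.1)
  have hderL : ∀ z ∈ Ioo β1 α, (derivative p).eval z ≠ 0 := fun z hz => hder z (Or.inl hz)
  have hderR : ∀ z ∈ Ioo α β2, (derivative p).eval z ≠ 0 := fun z hz => hder z (Or.inr hz)
  have hα0 : p.eval α = 0 := hα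
  -- sign of g = p'/p on the two open intervals
  have gneg : ∀ x ∈ Ioo β1 α, (derivative p).eval x / p.eval x < 0 := by
    intro x hx
    have hpx := pL x hx
    obtain ⟨ξ, hξ, hslope⟩ := exists_hasDerivAt_eq_slope (fun t => p.eval t)
      (fun t => (derivative p).eval t) hx.2 (p.continuousOn_aeval)
      (fun t _ => p.hasDerivAt t)
    have hξI : ξ ∈ Ioo β1 α := ⟨lt_trans hx.1 hξ.1, hξ.2⟩
    have hαx : 0 < α - x := by linarith [hx.2]
    have hAeq : (derivative p).eval ξ * (α - x) = - p.eval x := by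
      rw [hslope, hα0]
      field_simp
      ring
    have hsign := sign_const (derivative p).continuous_aeval hderL hx hξI
    have h3 : 0 < ((derivative p).eval x * (derivative p).eval ξ) * (α - x) :=
      mul_pos hsign hαx
    have h4 : (derivative p).eval x * ((derivative p).eval ξ * (α - x))
        = (derivative p).eval x * (- p.eval x) := by rw [hAeq]
    have key : (derivative p).eval x * p.eval x < 0 := by nlinarith [h3, h4]
    have hq : (derivative p).eval x / p.eval x
        = ((derivative p).eval x * p.eval x) / (p.eval x) ^ 2 := by
      rw [sq]; exact (mul_div_mul_right _ _ hpx).symm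
    rw [hq]
    exact div_neg_of_neg_of_pos key (by positivity)
  have gpos : ∀ x ∈ Ioo α β2, 0 < (derivative p).eval x / p.eval x := by
    intro x hx
    have hpx := pR x hx
    obtain ⟨ξ, hξ, hslope⟩ := exists_hasDerivAt_eq_slope (fun t => p.eval t)
      (fun t => (derivative p).eval t) hx.1 (p.continuousOn_aeval)
      (fun t _ => p.hasDerivAt t)
    have hξI : ξ ∈ Ioo α β2 := ⟨hξ.1, lt_trans hξ.2 hx.2⟩
    have hαx : 0 < x - α := by linarith [hx.1]
    have hAeq : (derivative p).eval ξ * (x - α) = p.eval x := by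
      rw [hslope, hα0]
      field_simp
      ring
    have hsign := sign_const (derivative p).continuous_aeval hderR hx hξI
    have h3 : 0 < ((derivative p).eval x * (derivative p).eval ξ) * (x - α) :=
      mul_pos hsign hαx
    have h4 : (derivative p).eval x * ((derivative p).eval ξ * (x - α))
        = (derivative p).eval x * p.eval x := by rw [hAeq]
    have key : 0 < (derivative p).eval x * p.eval x := by nlinarith [h3, h4]
    have hq : (derivative p).eval x / p.eval x
        = ((derivative p).eval x * p.eval x) / (p.eval x) ^ 2 := by
      rw [sq]; exact (mul_div_mul_right _ _ hpx).symm
    rw [hq]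
    exact div_pos key (by positivity)
  have gβ1 : (derivative p).eval β1 / p.eval β1 = 0 := by
    rw [show (derivative p).eval β1 = 0 from h1, zero_div]
  have gβ2 : (derivative p).eval β2 / p.eval β2 = 0 := by
    rw [show (derivative p).eval β2 = 0 from h2, zero_div]
  -- p does not vanish at β1 or β2
  have pβ1 : p.eval β1 ≠ 0 := by
    intro h0
    obtain ⟨δ, hδpos, hδ⟩ := local_behavior p hp0 (show p.IsRoot β1 from h0)
    set x := β1 + min δ (α - β1) / 2 with hxdef
    have hmin : 0 < min δ (α - β1) := lt_min hδpos (by linarith)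
    have hx : x ∈ Ioo β1 α := by
      constructor
      · rw [hxdef]; linarith
      · have : min δ (α - β1) ≤ α - β1 := min_le_right _ _
        rw [hxdef]; linarith
    have h5 := hδ x (by rw [hxdef]; intro h; nlinarith [hmin])
      (by rw [hxdef]; rw [show β1 + min δ (α - β1) / 2 - β1 = min δ (α - β1) / 2 by ring,
          abs_of_pos (by linarith)]; linarith [min_le_left δ (α - β1)])
    have hgx := gneg x hx
    have hxβ : 0 < x - β1 := by rw [hxdef]; linarith
    nlinarith [h5.2, mul_neg_of_neg_of_pos hgx hxβ]
  have pβ2 : p.eval β2 ≠ 0 := by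
    intro h0
    obtain ⟨δ, hδpos, hδ⟩ := local_behavior p hp0 (show p.IsRoot β2 from h0)
    set x := β2 - min δ (β2 - α) / 2 with hxdef
    have hmin : 0 < min δ (β2 - α) := lt_min hδpos (by linarith)
    have hx : x ∈ Ioo α β2 := by
      constructor
      · have : min δ (β2 - α) ≤ β2 - α := min_le_right _ _
        rw [hxdef]; linarith
      · rw [hxdef]; linarith
    have h5 := hδ x (by rw [hxdef]; intro h; nlinarith [hmin])
      (by rw [hxdef]; rw [show β2 - min δ (β2 - α) / 2 - β2 = -(min δ (β2 - α) / 2) by ring,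
          abs_neg, abs_of_pos (by linarith)]; linarith [min_le_left δ (β2 - α)])
    have hgx := gpos x hx
    have hxβ : x - β2 < 0 := by rw [hxdef]; linarith
    nlinarith [h5.2, mul_neg_of_pos_of_neg hgx hxβ]
  -- local behavior at α
  obtain ⟨δα, hδαpos, hδα⟩ := local_behavior p hp0 hα
  -- F negative near β1 from the right
  have haL : ∀ ε > (0:ℝ), ∃ x ∈ Ioo β1 α, x < β1 + ε ∧ (Fq p).eval x < 0 := by
    intro ε hε
    set x := β1 + min ε (α - β1) / 2 with hxdef
    have hmin : 0 < min ε (α - β1) := lt_min hε (by linarith)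
    have hx : x ∈ Ioo β1 α := by
      constructor
      · rw [hxdef]; linarith
      · have : min ε (α - β1) ≤ α - β1 := min_le_right _ _
        rw [hxdef]; linarith
    have hicc : ∀ t ∈ Icc β1 x, p.eval t ≠ 0 := by
      intro t ht
      rcases eq_or_lt_of_le ht.1 with h | h
      · rw [← h]; exact pβ1
      · exact pL t ⟨h, lt_of_le_of_lt ht.2 hx.2⟩
    have hg : (derivative p).eval x / p.eval x < (derivative p).eval β1 / p.eval β1 := by
      rw [gβ1]; exact gneg x hx
    obtain ⟨ξ, hξ, hF⟩ := neg_point p hx.1 hicc hg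
    refine ⟨ξ, ⟨hξ.1, lt_trans hξ.2 hx.2⟩, ?_, hF⟩
    have : min ε (α - β1) ≤ ε := min_le_left _ _
    have hxε : x < β1 + ε := by rw [hxdef]; linarith
    linarith [hξ.2]
  -- F negative near β2 from the left
  have hbR : ∀ ε > (0:ℝ), ∃ y ∈ Ioo α β2, β2 - ε < y ∧ (Fq p).eval y < 0 := by
    intro ε hε
    set x := β2 - min ε (β2 - α) / 2 with hxdef
    have hmin : 0 < min ε (β2 - α) := lt_min hε (by linarith)
    have hx : x ∈ Ioo α β2 := by
      constructor
      · have : min ε (β2 - α) ≤ β2 - α := min_le_right _ _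
        rw [hxdef]; linarith
      · rw [hxdef]; linarith
    have hicc : ∀ t ∈ Icc x β2, p.eval t ≠ 0 := by
      intro t ht
      rcases eq_or_lt_of_le ht.2 with h | h
      · rw [h]; exact pβ2
      · exact pR t ⟨lt_of_lt_of_le hx.1 ht.1, h⟩
    have hg : (derivative p).eval β2 / p.eval β2 < (derivative p).eval x / p.eval x := by
      rw [gβ2]; exact gpos x hx
    obtain ⟨ξ, hξ, hF⟩ := neg_point p hx.2 hicc hg
    refine ⟨ξ, ⟨lt_trans hx.1 hξ.1, hξ.2⟩, ?_, hF⟩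
    have : min ε (β2 - α) ≤ ε := min_le_left _ _
    have hxε : β2 - ε < x := by rw [hxdef]; linarith
    linarith [hξ.1]
  -- F negative near α from the left
  have hbL : ∀ ε > (0:ℝ), ∃ y ∈ Ioo β1 α, α - ε < y ∧ (Fq p).eval y < 0 := by
    intro ε hε
    set e := min ε (α - β1) with hedef
    have he : 0 < e := lt_min hε (by linarith)
    set c := α - e / 2 with hcdef
    have hc : c ∈ Ioo β1 α := by
      constructor
      · have : e ≤ α - β1 := min_le_right _ _
        rw [hcdef]; linarith
      · rw [hcdef]; linarith
    have hgc := gneg c hc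
    have hgcneg : 0 < -((derivative p).eval c / p.eval c) := neg_pos.2 hgc
    set T := min δα (min (α - c) ((1/2) / (-((derivative p).eval c / p.eval c)))) with hTdef
    have hT : 0 < T := lt_min hδαpos (lt_min (by rw [hcdef]; linarith)
      (div_pos one_half_pos hgcneg))
    have hT1 : T ≤ δα := min_le_left _ _
    have hT2 : T ≤ α - c := le_trans (min_le_right _ _) (min_le_left _ _)
    have hT3 : T ≤ (1/2) / (-((derivative p).eval c / p.eval c)) :=
      le_trans (min_le_right _ _) (min_le_right _ _)
    set d := α - T / 2 with hddef
    clear_value e c T d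
    have hcd : c < d := by rw [hddef]; linarith
    have hd : d ∈ Ioo β1 α := ⟨lt_trans hc.1 hcd, by rw [hddef]; linarith⟩
    have hdα : d - α = -(T/2) := by rw [hddef]; ring
    have h5 := hδα d (by intro h; rw [h] at hdα; simp at hdα; linarith)
      (by rw [hdα, abs_neg, abs_of_pos (by linarith)]; linarith)
    have hgd : (derivative p).eval d / p.eval d < (derivative p).eval c / p.eval c := by
      by_contra hcon
      push_neg at hcon
      have h6 : (derivative p).eval d / p.eval d * (d - α)
          ≤ (derivative p).eval c / p.eval c * (d - α) :=
        mul_le_mul_of_nonpos_right hcon (by linarith)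
      have h7 : T/2 * (-((derivative p).eval c / p.eval c)) < 1/2 := by
        have hTT : T/2 < (1/2) / (-((derivative p).eval c / p.eval c)) := by linarith
        have := mul_lt_mul_of_pos_right hTT hgcneg
        rwa [div_mul_cancel₀ _ (ne_of_gt hgcneg)] at this
      have h8 : (derivative p).eval c / p.eval c * (d - α)
          = T/2 * (-((derivative p).eval c / p.eval c)) := by rw [hdα]; ring
      linarith [h5.2]
    have hicc : ∀ t ∈ Icc c d, p.eval t ≠ 0 :=
      fun t ht => pL t ⟨lt_of_lt_of_le hc.1 ht.1, lt_of_le_of_lt ht.2 hd.2⟩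
    obtain ⟨ξ, hξ, hF⟩ := neg_point p hcd hicc hgd
    refine ⟨ξ, ⟨lt_trans hc.1 hξ.1, lt_trans hξ.2 hd.2⟩, ?_, hF⟩
    have : e ≤ ε := by rw [hedef]; exact min_le_left _ _
    have : α - ε < c := by rw [hcdef]; linarith
    linarith [hξ.1]
  -- F negative near α from the right
  have haR : ∀ ε > (0:ℝ), ∃ x ∈ Ioo α β2, x < α + ε ∧ (Fq p).eval x < 0 := by
    intro ε hε
    set e := min ε (β2 - α) with hedef
    have he : 0 < e := lt_min hε (by linarith)
    set c := α + e / 2 with hcdef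
    have hc : c ∈ Ioo α β2 := by
      constructor
      · rw [hcdef]; linarith
      · have : e ≤ β2 - α := min_le_right _ _
        rw [hcdef]; linarith
    have hgc := gpos c hc
    set T := min δα (min (c - α) ((1/2) / ((derivative p).eval c / p.eval c))) with hTdef
    have hT : 0 < T := lt_min hδαpos (lt_min (by rw [hcdef]; linarith)
      (div_pos one_half_pos hgc))
    have hT1 : T ≤ δα := min_le_left _ _
    have hT2 : T ≤ c - α := le_trans (min_le_right _ _) (min_le_left _ _)
    have hT3 : T ≤ (1/2) / ((derivative p).eval c / p.eval c) :=
      le_trans (min_le_right _ _) (min_le_right _ _)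
    set d := α + T / 2 with hddef
    clear_value e c T d
    have hdc : d < c := by rw [hddef]; linarith
    have hd : d ∈ Ioo α β2 := ⟨by rw [hddef]; linarith, lt_trans hdc hc.2⟩
    have hdα : d - α = T/2 := by rw [hddef]; ring
    have h5 := hδα d (by intro h; rw [h] at hdα; simp at hdα; linarith)
      (by rw [hdα, abs_of_pos (by linarith)]; linarith)
    have hgd : (derivative p).eval c / p.eval c < (derivative p).eval d / p.eval d := by
      by_contra hcon
      push_neg at hcon
      have h6 : (derivative p).eval d / p.eval d * (d - α)
          ≤ (derivative p).eval c / p.eval c * (d - α) :=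
        mul_le_mul_of_nonneg_right hcon (by linarith)
      have h7 : T/2 * ((derivative p).eval c / p.eval c) < 1/2 := by
        have hTT : T/2 < (1/2) / ((derivative p).eval c / p.eval c) := by linarith
        have := mul_lt_mul_of_pos_right hTT hgc
        rwa [div_mul_cancel₀ _ (ne_of_gt hgc)] at this
      have h8 : (derivative p).eval c / p.eval c * (d - α)
          = T/2 * ((derivative p).eval c / p.eval c) := by rw [hdα]; ring
      linarith [h5.2]
    have hicc : ∀ t ∈ Icc d c, p.eval t ≠ 0 :=
      fun t ht => pR t ⟨lt_of_lt_of_le hd.1 ht.1, lt_of_le_of_lt ht.2 hc.2⟩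
    obtain ⟨ξ, hξ, hF⟩ := neg_point p hdc hicc hgd
    refine ⟨ξ, ⟨lt_trans hd.1 hξ.1, lt_trans hξ.2 hc.2⟩, ?_, hF⟩
    have : e ≤ ε := by rw [hedef]; exact min_le_left _ _
    have : c < α + ε := by rw [hcdef]; linarith
    linarith [hξ.2]
  -- conclude
  have ZQL : ZQ p (Ioo β1 α) = Multiset.card ((Fq p).roots.filter fun x => x ∈ Ioo β1 α) := by
    unfold ZQ
    refine congrArg _ (Multiset.ext.2 fun a => ?_)
    by_cases hmem : a ∈ Ioo β1 α
    · simp [Multiset.count_filter, hmem, pL a hmem]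
    · simp only [Multiset.count_filter]
      rw [if_neg hmem, if_neg (fun h => hmem h.2)]
  have ZQR : ZQ p (Ioo α β2) = Multiset.card ((Fq p).roots.filter fun x => x ∈ Ioo α β2) := by
    unfold ZQ
    refine congrArg _ (Multiset.ext.2 fun a => ?_)
    by_cases hmem : a ∈ Ioo α β2
    · simp [Multiset.count_filter, hmem, pR a hmem]
    · simp only [Multiset.count_filter]
      rw [if_neg hmem, if_neg (fun h => hmem h.2)]
  constructor
  · rw [ZQL]; exact even_card _ _ _ hα1 haL hbL
  · rw [ZQR]; exact even_card _ _ _ hα2 haR hbR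
end

section
/- For any nonconstant real polynomial p, the function Q(z) = (p'(z)/p(z))' has an even total number of real zeros, counted with multiplicity. -/
open Polynomial Set
open scoped Classical

lemma Fq_mul (a b : Polynomial ℝ) : Fq (a * b) = b ^ 2 * Fq a + a ^ 2 * Fq b := by
  simp only [Fq, derivative_mul, derivative_add]
  ring

lemma Fq_pow (r : ℝ) (k : ℕ) :
    Fq ((X - C r) ^ (k + 1)) = -C ((k : ℝ) + 1) * ((X - C r) ^ k) ^ 2 := by
  have hd : derivative (X - C r) = 1 := by simp
  have h1 : derivative ((X - C r) ^ (k + 1)) = C ((k : ℝ) + 1) * (X - C r) ^ k := by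
    rw [derivative_pow, hd, mul_one, Nat.add_sub_cancel]
    push_cast; ring
  have hkey : (X - C r) ^ (k + 1) * derivative ((X - C r) ^ k)
      = C (k : ℝ) * ((X - C r) ^ k) ^ 2 := by
    cases k with
    | zero => simp
    | succ j =>
      rw [derivative_pow, hd, mul_one, Nat.add_sub_cancel]
      push_cast; ring
  have h2 : derivative (C ((k : ℝ) + 1) * (X - C r) ^ k)
      = C ((k : ℝ) + 1) * derivative ((X - C r) ^ k) := by
    rw [derivative_mul, derivative_C, zero_mul, zero_add]
  calc Fq ((X - C r) ^ (k + 1))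
      = (X - C r) ^ (k + 1) * derivative (derivative ((X - C r) ^ (k + 1)))
        - (derivative ((X - C r) ^ (k + 1))) ^ 2 := rfl
    _ = C ((k : ℝ) + 1) * ((X - C r) ^ (k + 1) * derivative ((X - C r) ^ k))
        - (C ((k : ℝ) + 1) * (X - C r) ^ k) ^ 2 := by rw [h1, h2]; ring
    _ = C ((k : ℝ) + 1) * (C (k : ℝ) * ((X - C r) ^ k) ^ 2)
        - (C ((k : ℝ) + 1) * (X - C r) ^ k) ^ 2 := by rw [hkey]
    _ = (C ((k : ℝ) + 1) * C (k : ℝ) - C ((k : ℝ) + 1) ^ 2) * ((X - C r) ^ k) ^ 2 := by ring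
    _ = -C ((k : ℝ) + 1) * ((X - C r) ^ k) ^ 2 := by
        rw [← C_mul, ← C_pow, ← C_sub, ← C_neg]; ring_nf

lemma even_rootMultiplicity_Fq (p : Polynomial ℝ) (hp : p ≠ 0) (hF : Fq p ≠ 0)
    (r : ℝ) (hr : p.eval r = 0) : Even (rootMultiplicity r (Fq p)) := by
  obtain ⟨g, hpg, hg⟩ := p.exists_eq_pow_rootMultiplicity_mul_and_not_dvd hp r
  have hm : 0 < rootMultiplicity r p := (rootMultiplicity_pos hp).mpr hr
  obtain ⟨k, hk⟩ : ∃ k, rootMultiplicity r p = k + 1 :=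
    ⟨rootMultiplicity r p - 1, by omega⟩
  rw [hk] at hpg
  have hgr : g.eval r ≠ 0 := fun h => hg (dvd_iff_isRoot.mpr h)
  set h : Polynomial ℝ := -C ((k : ℝ) + 1) * g ^ 2 + (X - C r) ^ 2 * Fq g with hh
  have hFq : Fq p = ((X - C r) ^ k) ^ 2 * h := by
    rw [hpg, Fq_mul, Fq_pow, hh]
    ring
  have hFq' : Fq p = (X - C r) ^ (k * 2) * h := by rw [hFq, ← pow_mul]
  have hne : (X - C r : Polynomial ℝ) ^ (k * 2) * h ≠ 0 := hFq' ▸ hF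
  have hhr : ¬ IsRoot h r := by
    simp only [hh, IsRoot, eval_add, eval_mul, eval_neg, eval_C, eval_pow, eval_sub, eval_X,
      sub_self]
    intro hcon
    have : ((k : ℝ) + 1) * g.eval r ^ 2 = 0 := by
      rw [zero_pow (by norm_num), zero_mul, add_zero] at hcon
      linarith [hcon]
    rcases mul_eq_zero.mp this with h1 | h1
    · have : (0:ℝ) < (k : ℝ) + 1 := by positivity
      linarith
    · exact hgr (pow_eq_zero_iff (by norm_num) |>.mp h1)
  rw [hFq', rootMultiplicity_mul hne, rootMultiplicity_X_sub_C_pow,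
    rootMultiplicity_eq_zero hhr, add_zero]
  exact ⟨k, by ring⟩

lemma Fq_natDegree (p : Polynomial ℝ) (hdeg : 0 < p.natDegree) :
    Fq p ≠ 0 ∧ (Fq p).natDegree = 2 * (p.natDegree - 1) := by
  set n := p.natDegree with hn
  have hp : p ≠ 0 := fun h => by rw [h] at hn; simp at hn; omega
  rcases eq_or_lt_of_le (Nat.one_le_iff_ne_zero.mpr (by omega) : 1 ≤ n) with h1 | h2
  · -- n = 1
    have hd1 : (derivative p).natDegree = 0 := by
      have := degree_derivative_eq p hdeg
      rw [← hn, ← h1] at this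
      simp only [Nat.sub_self, Nat.cast_zero] at this
      exact natDegree_eq_zero_iff_degree_le_zero.mpr (le_of_eq this)
    have hd1' : derivative p ≠ 0 := by
      intro h
      have := natDegree_eq_zero_of_derivative_eq_zero h
      omega
    have hd2 : derivative (derivative p) = 0 := derivative_of_natDegree_zero hd1
    have hFq : Fq p = -((derivative p) ^ 2) := by rw [Fq, hd2, mul_zero, zero_sub]
    constructor
    · rw [hFq]
      simp only [ne_eq, neg_eq_zero, pow_eq_zero_iff, OfNat.ofNat_ne_zero, not_false_eq_true]
      exact hd1'
    · rw [hFq, natDegree_neg, natDegree_pow, hd1, ← h1]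
  · -- n ≥ 2
    have hnd1 : (derivative p).natDegree = n - 1 := by
      have := degree_derivative_eq p hdeg
      exact natDegree_eq_of_degree_eq_some this
    have hd1' : derivative p ≠ 0 := by
      intro h; rw [h] at hnd1; simp at hnd1; omega
    have hdegd : 0 < (derivative p).natDegree := by omega
    have hnd2 : (derivative (derivative p)).natDegree = n - 2 := by
      have := degree_derivative_eq (derivative p) hdegd
      rw [hnd1] at this
      have h' := natDegree_eq_of_degree_eq_some this
      rw [h']; omega
    have hc1 : (derivative p).coeff (n - 1) = p.leadingCoeff * n := by
      rw [coeff_derivative]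
      have : n - 1 + 1 = n := by omega
      rw [this, leadingCoeff]
      have : ((n - 1 : ℕ) : ℝ) + 1 = (n : ℝ) := by
        rw [Nat.cast_sub (by omega)]; ring
      rw [this]
    have hc2 : (derivative (derivative p)).coeff (n - 2)
        = p.leadingCoeff * n * (n - 1 : ℝ) := by
      rw [coeff_derivative]
      have he : n - 2 + 1 = n - 1 := by omega
      rw [he, hc1]
      have : ((n - 2 : ℕ) : ℝ) + 1 = (n : ℝ) - 1 := by
        rw [Nat.cast_sub (by omega)]; push_cast; ring
      rw [this]
    have hcoeff : (Fq p).coeff (2 * (n - 1)) = -(p.leadingCoeff ^ 2 * n) := by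
      have e1 : n + (n - 2) = 2 * (n - 1) := by omega
      have e2 : (n - 1) + (n - 1) = 2 * (n - 1) := by omega
      rw [Fq, coeff_sub]
      have hmul : (p * derivative (derivative p)).coeff (2 * (n - 1))
          = p.leadingCoeff * (p.leadingCoeff * n * ((n : ℝ) - 1)) := by
        rw [← e1]
        have := coeff_mul_degree_add_degree p (derivative (derivative p))
        rw [hnd2] at this
        rw [this, leadingCoeff, leadingCoeff, hnd2, hc2, ← leadingCoeff]
      have hsq : ((derivative p) ^ 2).coeff (2 * (n - 1))
          = (p.leadingCoeff * n) * (p.leadingCoeff * n) := by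
        rw [← e2, sq]
        have := coeff_mul_degree_add_degree (derivative p) (derivative p)
        rw [hnd1] at this
        rw [this, leadingCoeff, hnd1, hc1]
      rw [hmul, hsq]; ring
    have hlc : p.leadingCoeff ≠ 0 := leadingCoeff_ne_zero.mpr hp
    have hcne : (Fq p).coeff (2 * (n - 1)) ≠ 0 := by
      rw [hcoeff]
      have : (0:ℝ) < p.leadingCoeff ^ 2 * n := by
        have : (0:ℝ) < (n:ℝ) := by exact_mod_cast hdeg
        positivity
      intro h; rw [neg_eq_zero] at h; linarith
    have hFne : Fq p ≠ 0 := fun h => hcne (by rw [h]; simp)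
    refine ⟨hFne, le_antisymm ?_ (le_natDegree_of_ne_zero hcne)⟩
    apply le_trans (natDegree_sub_le _ _)
    apply max_le
    · apply le_trans (natDegree_mul_le)
      rw [hnd2]; omega
    · rw [natDegree_pow, hnd1]

lemma even_card_roots_of_even_natDegree (q : Polynomial ℝ) (hq : q ≠ 0)
    (he : Even q.natDegree) : Even (Multiset.card q.roots) := by
  classical
  set Q : Polynomial ℂ := q.map (algebraMap ℝ ℂ) with hQ
  have hQne : Q ≠ 0 := by
    rw [hQ, ne_eq, Polynomial.map_eq_zero_iff (algebraMap ℝ ℂ).injective]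
    exact hq
  have hsplits : Q.Splits := IsAlgClosed.splits Q
  have hcard : Multiset.card Q.roots = q.natDegree := by
    rw [hQ]
    rw [← Splits.natDegree_eq_card_roots (IsAlgClosed.splits _), natDegree_map]
  -- conjugation invariance
  have hconjQ : Q.map (starRingEnd ℂ) = Q := by
    rw [hQ, Polynomial.map_map]
    congr 1
    ext r
    simp [Complex.conj_ofReal]
  have hconjroots : Q.roots.map (starRingEnd ℂ) = Q.roots := by
    have := Splits.roots_map hsplits (starRingEnd ℂ)
    rw [hconjQ] at this
    exact this.symm
  -- real roots of q correspond to roots of Q with im = 0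
  have hreal : Q.roots.filter (fun z => z.im = 0) = q.roots.map (algebraMap ℝ ℂ) := by
    ext z
    by_cases hz : z.im = 0
    · rw [Multiset.count_filter_of_pos (p := fun z : ℂ => z.im = 0) hz]
      have hz' : z = (algebraMap ℝ ℂ) z.re := by
        apply Complex.ext <;> simp [hz]
      rw [hz', Multiset.count_map_eq_count' _ _ (algebraMap ℝ ℂ).injective,
        count_roots, count_roots, hQ, ← eq_rootMultiplicity_map (algebraMap ℝ ℂ).injective]
    · rw [Multiset.count_filter_of_neg (p := fun z : ℂ => z.im = 0) hz, eq_comm, Multiset.count_eq_zero]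
      intro hmem
      obtain ⟨x, _, rfl⟩ := Multiset.mem_map.mp hmem
      exact hz (by simp)
  have hrealcard : Multiset.card (Q.roots.filter (fun z => z.im = 0))
      = Multiset.card q.roots := by rw [hreal, Multiset.card_map]
  -- nonreal roots come in pairs
  have hneg : Q.roots.filter (fun z => z.im < 0)
      = (Q.roots.filter (fun z => 0 < z.im)).map (starRingEnd ℂ) := by
    conv_lhs => rw [← hconjroots]
    rw [Multiset.filter_map]
    congr 1
    apply Multiset.filter_congr
    intro z _
    simp only [Function.comp_apply, Complex.conj_im]
    constructor <;> intro <;> linarith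
  have hsplit2 : Multiset.card (Q.roots.filter (fun z => z.im ≠ 0))
      = 2 * Multiset.card (Q.roots.filter (fun z => 0 < z.im)) := by
    have h1 : Multiset.card (Q.roots.filter (fun z => 0 < z.im))
        + Multiset.card (Q.roots.filter (fun z => z.im < 0))
        = Multiset.card (Q.roots.filter (fun z => 0 < z.im ∨ z.im < 0))
        + Multiset.card (Q.roots.filter (fun z => 0 < z.im ∧ z.im < 0)) := by
      rw [← Multiset.card_add, ← Multiset.card_add, Multiset.filter_add_filter]
    have h2 : Q.roots.filter (fun z => 0 < z.im ∧ z.im < 0) = 0 := by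
      rw [Multiset.filter_eq_nil]
      rintro z _ ⟨hz1, hz2⟩
      linarith
    have h3 : Q.roots.filter (fun z => 0 < z.im ∨ z.im < 0)
        = Q.roots.filter (fun z => z.im ≠ 0) := by
      apply Multiset.filter_congr
      intro z _
      constructor
      · rintro (h | h) <;> intro hc <;> rw [hc] at h <;> linarith
      · intro h
        rcases lt_or_gt_of_ne h with h' | h'
        · exact Or.inr h'
        · exact Or.inl h'
    rw [h2, Multiset.card_zero, add_zero, h3] at h1
    rw [← h1, hneg, Multiset.card_map]
    ring
  -- combine
  have htot : Multiset.card (Q.roots.filter (fun z => z.im = 0))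
      + Multiset.card (Q.roots.filter (fun z => z.im ≠ 0)) = Multiset.card Q.roots := by
    rw [← Multiset.card_add]
    congr 1
    exact Multiset.filter_add_not (fun z : ℂ => z.im = 0) Q.roots
  rw [hrealcard, hcard] at htot
  obtain ⟨a, ha⟩ := he
  rw [hsplit2] at htot
  exact ⟨a - Multiset.card (Q.roots.filter (fun z => 0 < z.im)), by omega⟩

theorem Q_even_number_of_real_zeros (p : Polynomial ℝ) (hdeg : 0 < p.natDegree) :
    Even (ZQ p Set.univ) := by
  classical
  have hp : p ≠ 0 := fun h => by rw [h, natDegree_zero] at hdeg; omega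
  obtain ⟨hFne, hFdeg⟩ := Fq_natDegree p hdeg
  set s := (Fq p).roots with hs
  have htotal : Even (Multiset.card s) := by
    apply even_card_roots_of_even_natDegree _ hFne
    rw [hFdeg]
    exact ⟨p.natDegree - 1, by ring⟩
  have hsplit : ZQ p Set.univ
      + Multiset.card (s.filter (fun x => ¬(p.eval x ≠ 0 ∧ x ∈ Set.univ)))
      = Multiset.card s := by
    rw [ZQ, ← Multiset.card_add, ← hs]
    congr 1
    have h := Multiset.filter_add_not (fun x => p.eval x ≠ 0 ∧ x ∈ Set.univ) s
    convert h using 3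
  have hzero : Even (Multiset.card
      (s.filter (fun x => ¬(p.eval x ≠ 0 ∧ x ∈ Set.univ)))) := by
    have hfe : s.filter (fun x => ¬(p.eval x ≠ 0 ∧ x ∈ Set.univ))
        = s.filter (fun x => p.eval x = 0) := by
      apply Multiset.filter_congr
      intro x _
      simp [Set.mem_univ]
    rw [hfe]
    set t := s.filter (fun x => p.eval x = 0) with ht
    rw [← Multiset.toFinset_sum_count_eq]
    apply Finset.even_sum
    intro a ha
    have ham : a ∈ t := Multiset.mem_toFinset.mp ha
    have hpa : p.eval a = 0 := by
      have := Multiset.of_mem_filter (by rw [← ht]; exact ham)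
      exact this
    rw [ht, Multiset.count_filter_of_pos (p := fun x => p.eval x = 0) hpa, hs, count_roots]
    exact even_rootMultiplicity_Fq p hp hFne a hpa
  obtain ⟨u, hu⟩ := htotal
  obtain ⟨v, hv⟩ := hzero
  exact ⟨u - v, by omega⟩
end

section
/- Let p be a real polynomial and (a,b) an open interval on which p, p', p'' and Q1 = (p''/p')' are all nonvanishing. If for all sufficiently small δ > 0 one has p'(a+δ)p''(a+δ)Q(a+δ)Q1(a+δ) < 0, then Q = (p'/p)' has at most one zero (counted with multiplicity) in (a, b). -/
open Polynomial Set
open scoped Classical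

/-- A continuous (polynomial) function nonvanishing on an interval has constant sign there. -/
lemma same_sign_aux (f : Polynomial ℝ) {a b : ℝ} (h : ∀ z ∈ Set.Ioo a b, f.eval z ≠ 0)
    {x y : ℝ} (hx : x ∈ Set.Ioo a b) (hy : y ∈ Set.Ioo a b) :
    0 < f.eval x * f.eval y := by
  by_contra hc
  push_neg at hc
  have hx0 := h x hx
  have hy0 := h y hy
  have hlt : f.eval x * f.eval y < 0 := lt_of_le_of_ne hc (mul_ne_zero hx0 hy0)
  have hsub : Set.uIcc x y ⊆ Set.Ioo a b := Set.ordConnected_Ioo.uIcc_subset hx hy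
  have hcont : ContinuousOn (fun z => f.eval z) (Set.uIcc x y) :=
    f.continuous.continuousOn
  have h0 : (0 : ℝ) ∈ Set.uIcc (f.eval x) (f.eval y) := by
    rcases mul_neg_iff.mp hlt with ⟨h1, h2⟩ | ⟨h1, h2⟩
    · exact Set.mem_uIcc.mpr (Or.inr ⟨h2.le, h1.le⟩)
    · exact Set.mem_uIcc.mpr (Or.inl ⟨h1.le, h2.le⟩)
  obtain ⟨c, hc1, hc2⟩ := intermediate_value_uIcc hcont h0
  exact h c (hsub hc1) hc2

/-- A polynomial cannot have two consecutive zeros with positive derivative at each. -/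
lemma no_two_roots_pos (f : Polynomial ℝ) {ζ1 ζ2 : ℝ} (h12 : ζ1 < ζ2)
    (h1 : f.eval ζ1 = 0) (h2 : f.eval ζ2 = 0)
    (hd1 : 0 < (derivative f).eval ζ1) (hd2 : 0 < (derivative f).eval ζ2)
    (hmin : ∀ x ∈ Set.Ioo ζ1 ζ2, f.eval x ≠ 0) : False := by
  have hm : (ζ1 + ζ2) / 2 ∈ Set.Ioo ζ1 ζ2 := ⟨by linarith, by linarith⟩
  rcases (hmin _ hm).lt_or_gt with hneg | hpos
  · -- f < 0 on the interval: contradiction with the derivative at ζ1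
    have hall : ∀ y ∈ Set.Ioo ζ1 ζ2, f.eval y < 0 := by
      intro y hy
      have hp := same_sign_aux f hmin hy hm
      nlinarith
    have hslope : Filter.Tendsto (slope (fun x => f.eval x) ζ1) (nhdsWithin ζ1 (Set.Ioi ζ1))
        (nhds ((derivative f).eval ζ1)) :=
      (hasDerivAt_iff_tendsto_slope.mp (f.hasDerivAt ζ1)).mono_left
        (nhdsWithin_mono _ fun x hx => ne_of_gt hx)
    have hle : (derivative f).eval ζ1 ≤ 0 := by
      refine le_of_tendsto hslope ?_
      filter_upwards [Ioo_mem_nhdsGT_of_mem (Set.left_mem_Ico.mpr h12)] with y hy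
      rw [slope_def_field]
      have hfy := hall y hy
      apply div_nonpos_of_nonpos_of_nonneg
      · simp only [h1]; linarith
      · linarith [hy.1]
    linarith
  · -- f > 0 on the interval: contradiction with the derivative at ζ2
    have hall : ∀ y ∈ Set.Ioo ζ1 ζ2, 0 < f.eval y := by
      intro y hy
      have hp := same_sign_aux f hmin hy hm
      nlinarith
    have hslope : Filter.Tendsto (slope (fun x => f.eval x) ζ2) (nhdsWithin ζ2 (Set.Iio ζ2))
        (nhds ((derivative f).eval ζ2)) :=
      (hasDerivAt_iff_tendsto_slope.mp (f.hasDerivAt ζ2)).mono_left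
        (nhdsWithin_mono _ fun x hx => ne_of_lt hx)
    have hle : (derivative f).eval ζ2 ≤ 0 := by
      refine le_of_tendsto hslope ?_
      filter_upwards [Ioo_mem_nhdsLT_of_mem (Set.right_mem_Ioc.mpr h12)] with y hy
      rw [slope_def_field]
      have hfy := hall y hy
      apply div_nonpos_of_nonneg_of_nonpos
      · simp only [h2]; linarith
      · linarith [hy.2]
    linarith

theorem Q_at_most_one_zero_of_sign_condition (p : Polynomial ℝ) (a b : ℝ)
    (hab : a < b)
    (hne : ∀ z ∈ Set.Ioo a b, p.eval z ≠ 0 ∧ (derivative p).eval z ≠ 0 ∧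
      (derivative (derivative p)).eval z ≠ 0 ∧ Qeval (derivative p) z ≠ 0)
    (hsign : ∃ δ0 > 0, ∀ δ : ℝ, 0 < δ → δ < δ0 →
      (derivative p).eval (a + δ) * (derivative (derivative p)).eval (a + δ)
          * Qeval p (a + δ) * Qeval (derivative p) (a + δ) < 0) :
    ZQ p (Set.Ioo a b) ≤ 1 := by
  classical
  unfold ZQ
  by_cases hF : Fq p = 0
  · simp [hF]
  -- the numerator F₁ of Q₁ is nonvanishing on (a,b)
  have hF1 : ∀ z ∈ Set.Ioo a b, (Fq (derivative p)).eval z ≠ 0 := by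
    intro z hz h0
    have h4 := (hne z hz).2.2.2
    simp [Qeval, h0] at h4
  -- formula for the derivative of F
  have hFd : derivative (Fq p) =
      p * derivative (derivative (derivative p)) - derivative p * derivative (derivative p) := by
    simp only [Fq, derivative_sub, derivative_mul, derivative_pow, Polynomial.C_eq_natCast]
    ring
  -- at any two roots of F in (a,b), the derivative of F has the same (nonzero) sign
  have hkey : ∀ x ∈ Set.Ioo a b, (Fq p).eval x = 0 → ∀ y ∈ Set.Ioo a b, (Fq p).eval y = 0 →
      0 < (derivative (Fq p)).eval x * (derivative (Fq p)).eval y := by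
    intro x hx hfx y hy hfy
    have ex : (derivative (derivative p)).eval x * (derivative (Fq p)).eval x =
        (derivative p).eval x * (Fq (derivative p)).eval x := by
      have hx0 : p.eval x * (derivative (derivative p)).eval x - (derivative p).eval x ^ 2 = 0 := by
        simpa [Fq] using hfx
      rw [hFd]
      simp only [Fq, eval_mul, eval_sub, eval_pow]
      linear_combination ((derivative (derivative (derivative p))).eval x) * hx0
    have ey : (derivative (derivative p)).eval y * (derivative (Fq p)).eval y =
        (derivative p).eval y * (Fq (derivative p)).eval y := by
      have hy0 : p.eval y * (derivative (derivative p)).eval y - (derivative p).eval y ^ 2 = 0 := by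
        simpa [Fq] using hfy
      rw [hFd]
      simp only [Fq, eval_mul, eval_sub, eval_pow]
      linear_combination ((derivative (derivative (derivative p))).eval y) * hy0
    have h1 : 0 < (derivative p).eval x * (derivative p).eval y :=
      same_sign_aux (derivative p) (fun z hz => (hne z hz).2.1) hx hy
    have h2 : 0 < (Fq (derivative p)).eval x * (Fq (derivative p)).eval y :=
      same_sign_aux (Fq (derivative p)) hF1 hx hy
    have h3 : 0 < (derivative (derivative p)).eval x * (derivative (derivative p)).eval y :=
      same_sign_aux (derivative (derivative p)) (fun z hz => (hne z hz).2.2.1) hx hy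
    have hprod : ((derivative (derivative p)).eval x * (derivative (derivative p)).eval y) *
        ((derivative (Fq p)).eval x * (derivative (Fq p)).eval y) =
        ((derivative p).eval x * (derivative p).eval y) *
        ((Fq (derivative p)).eval x * (Fq (derivative p)).eval y) := by
      linear_combination ((derivative (derivative p)).eval y * (derivative (Fq p)).eval y) * ex +
        ((derivative p).eval x * (Fq (derivative p)).eval x) * ey
    nlinarith [mul_pos h1 h2, h3, hprod]
  -- there is at most one root of F in (a,b)
  have hlt2 : ∀ x ∈ Set.Ioo a b, (Fq p).eval x = 0 →
      ∀ y ∈ Set.Ioo a b, (Fq p).eval y = 0 → ¬ x < y := by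
    intro x hx hfx y hy hfy hxy
    set S : Finset ℝ := (Fq p).roots.toFinset.filter (fun t => x < t ∧ t ≤ y) with hS
    have hyS : y ∈ S := by
      simp only [hS, Finset.mem_filter, Multiset.mem_toFinset, mem_roots hF, IsRoot]
      exact ⟨hfy, hxy, le_refl y⟩
    have hSne : S.Nonempty := ⟨y, hyS⟩
    set ζ := S.min' hSne with hζdef
    have hζS := S.min'_mem hSne
    simp only [hS, Finset.mem_filter, Multiset.mem_toFinset, mem_roots hF, IsRoot] at hζS
    obtain ⟨hζ0, hxζ, hζy⟩ := hζS
    have hζab : ζ ∈ Set.Ioo a b := ⟨lt_trans hx.1 hxζ, lt_of_le_of_lt hζy hy.2⟩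
    have hmin : ∀ t ∈ Set.Ioo x ζ, (Fq p).eval t ≠ 0 := by
      intro t ht h0
      have htS : t ∈ S := by
        simp only [hS, Finset.mem_filter, Multiset.mem_toFinset, mem_roots hF, IsRoot]
        exact ⟨h0, ht.1, le_trans ht.2.le hζy⟩
      exact absurd (S.min'_le t htS) (not_le.mpr ht.2)
    have hprod := hkey x hx hfx ζ hζab hζ0
    rcases lt_trichotomy ((derivative (Fq p)).eval x) 0 with hneg | hzero | hpos
    · have hdζ : (derivative (Fq p)).eval ζ < 0 := by nlinarith
      refine no_two_roots_pos (-(Fq p)) hxζ (by simp [hfx]) (by simp [hζ0]) ?_ ?_ ?_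
      · simpa using hneg
      · simpa using hdζ
      · intro t ht
        simpa using hmin t ht
    · rw [hzero] at hprod; simp at hprod
    · have hdζ : 0 < (derivative (Fq p)).eval ζ := by nlinarith
      exact no_two_roots_pos (Fq p) hxζ hfx hζ0 hpos hdζ hmin
  have huniq : ∀ x ∈ Set.Ioo a b, (Fq p).eval x = 0 →
      ∀ y ∈ Set.Ioo a b, (Fq p).eval y = 0 → x = y := by
    intro x hx hfx y hy hfy
    by_contra hxy
    rcases lt_or_gt_of_ne hxy with h | h
    · exact hlt2 x hx hfx y hy hfy h
    · exact hlt2 y hy hfy x hx hfx h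
  -- counting
  have main : ∀ M : Multiset ℝ, M ≤ (Fq p).roots →
      (∀ t ∈ M, (Fq p).eval t = 0 ∧ t ∈ Set.Ioo a b) → Multiset.card M ≤ 1 := by
    intro M hle hmem
    by_cases hM0 : M = 0
    · simp [hM0]
    obtain ⟨ζ, hζM⟩ := Multiset.exists_mem_of_ne_zero hM0
    obtain ⟨hζroot, hζab⟩ := hmem ζ hζM
    have hall : ∀ t ∈ M, t = ζ := by
      intro t ht
      obtain ⟨htr, htab⟩ := hmem t ht
      exact huniq t htab htr ζ hζab hζroot
    have hrep : M = Multiset.replicate (Multiset.card M) ζ := Multiset.eq_replicate_card.mpr hall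
    have hcard : Multiset.card M = M.count ζ := by
      rw [hrep]
      simp [Multiset.count_replicate_self]
    have hF'ζ : (derivative (Fq p)).eval ζ ≠ 0 := by
      intro h
      have := hkey ζ hζab hζroot ζ hζab hζroot
      rw [h] at this
      simp at this
    have hmult : rootMultiplicity ζ (Fq p) ≤ 1 := by
      by_contra hcon
      push_neg at hcon
      have h2 : 0 < rootMultiplicity ζ (derivative (Fq p)) :=
        lt_of_lt_of_le (by omega)
          (rootMultiplicity_sub_one_le_derivative_rootMultiplicity (Fq p) ζ)
      exact hF'ζ ((rootMultiplicity_pos'.mp h2).2)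
    calc Multiset.card M = M.count ζ := hcard
      _ ≤ (Fq p).roots.count ζ := Multiset.count_le_of_le ζ hle
      _ = rootMultiplicity ζ (Fq p) := count_roots (Fq p)
      _ ≤ 1 := hmult
  have hfin : Multiset.card ((Fq p).roots.filter fun x => p.eval x ≠ 0 ∧ x ∈ Set.Ioo a b) ≤ 1 := by
    refine main _ (Multiset.filter_le _ _) ?_
    intro t ht
    exact ⟨(mem_roots hF).mp (Multiset.mem_of_mem_filter ht), (Multiset.of_mem_filter ht).2⟩
  convert hfin using 3
end

section
/- Let p be a real polynomial and (a,b) an open (possibly infinite) interval on which p, p', p'' are all nonvanishing. Then the number of zeros of Q = (p'/p)' in (a,b), counted with multiplicity, is at most 1 plus the number of zeros of Q1 = (p''/p')' in (a,b), counted with multiplicity. -/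
open Polynomial Set
open scoped Classical

/-- Key rootMultiplicity step: if `F'·q − F·q' = pp·G` and `x` is a root of `F`
at which `pp` does not vanish, then `rootMultiplicity x F - 1 ≤ rootMultiplicity x G`. -/
lemma aux_rootMult (F G q pp : Polynomial ℝ) {x : ℝ}
    (hid : derivative F * q - F * derivative q = pp * G)
    (hppx : pp.eval x ≠ 0) (hG : G ≠ 0) :
    rootMultiplicity x F - 1 ≤ rootMultiplicity x G := by
  set m := rootMultiplicity x F with hm
  have h1 : (X - C x) ^ (m - 1) ∣ derivative F := by
    rcases eq_or_ne (derivative F) 0 with h | h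
    · simp [h]
    · exact dvd_trans (pow_dvd_pow _
        (F.rootMultiplicity_sub_one_le_derivative_rootMultiplicity x))
        (pow_rootMultiplicity_dvd _ _)
  have h2 : (X - C x) ^ (m - 1) ∣ F :=
    dvd_trans (pow_dvd_pow _ (Nat.sub_le m 1)) (pow_rootMultiplicity_dvd _ _)
  have hdvd : (X - C x) ^ (m - 1) ∣ pp * G := by
    rw [← hid]
    exact dvd_sub (h1.mul_right q) (h2.mul_right (derivative q))
  have hpp0 : pp ≠ 0 := fun h => hppx (by simp [h])
  have hppG : pp * G ≠ 0 := mul_ne_zero hpp0 hG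
  have := (le_rootMultiplicity_iff hppG).mpr hdvd
  rwa [rootMultiplicity_mul hppG,
    rootMultiplicity_eq_zero (fun h => hppx h), zero_add] at this

/-- Rolle step: if `F'·q − F·q' = pp·G`, `q` and `pp` are nonvanishing on `Ioo a b`,
and `x < y` are roots of `F` in `Ioo a b`, then `G` has a root in `Ioo x y`. -/
lemma aux_rolle (F G q pp : Polynomial ℝ) {a b x y : ℝ}
    (hq : ∀ t ∈ Set.Ioo a b, q.eval t ≠ 0) (hpp : ∀ t ∈ Set.Ioo a b, pp.eval t ≠ 0)
    (hid : derivative F * q - F * derivative q = pp * G)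
    (hx : x ∈ Set.Ioo a b) (hy : y ∈ Set.Ioo a b) (hxy : x < y)
    (hFx : F.eval x = 0) (hFy : F.eval y = 0) :
    ∃ z ∈ Set.Ioo x y, G.eval z = 0 := by
  have hsub : Set.Icc x y ⊆ Set.Ioo a b := fun t ht =>
    ⟨lt_of_lt_of_le hx.1 ht.1, lt_of_le_of_lt ht.2 hy.2⟩
  have hsub' : Set.Ioo x y ⊆ Set.Ioo a b := fun t ht =>
    hsub ⟨le_of_lt ht.1, le_of_lt ht.2⟩
  set f : ℝ → ℝ := fun t => F.eval t / q.eval t with hf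
  set f' : ℝ → ℝ := fun t => (pp.eval t * G.eval t) / (q.eval t) ^ 2 with hf'
  have hcont : ContinuousOn f (Set.Icc x y) :=
    ContinuousOn.div F.continuousOn q.continuousOn fun t ht => hq t (hsub ht)
  have hfI : f x = f y := by simp [hf, hFx, hFy]
  have hderiv : ∀ t ∈ Set.Ioo x y, HasDerivAt f (f' t) t := by
    intro t ht
    have hqt : q.eval t ≠ 0 := hq t (hsub' ht)
    have hd := (F.hasDerivAt t).div (q.hasDerivAt t) hqt
    refine (hd : HasDerivAt f _ t).congr_deriv (Eq.symm ?_)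
    have h5 : (pp * G).eval t = (derivative F * q - F * derivative q).eval t := by rw [hid]
    simp only [eval_mul, eval_sub] at h5
    show pp.eval t * G.eval t / (q.eval t) ^ 2 = _
    rw [h5]
  obtain ⟨c, hc, hc0⟩ := exists_hasDerivAt_eq_zero hxy hcont hfI hderiv
  refine ⟨c, hc, ?_⟩
  have hqc : q.eval c ≠ 0 := hq c (hsub' hc)
  have hppc : pp.eval c ≠ 0 := hpp c (hsub' hc)
  have : pp.eval c * G.eval c = 0 := by
    have := hc0
    rw [hf'] at this
    field_simp at this
    simpa using this
  rcases mul_eq_zero.mp this with h | h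
  · exact absurd h hppc
  · exact h

/-- Main counting lemma. -/
lemma aux_count (F G q pp : Polynomial ℝ) {a b : ℝ} (hab : a < b)
    (hq : ∀ t ∈ Set.Ioo a b, q.eval t ≠ 0) (hpp : ∀ t ∈ Set.Ioo a b, pp.eval t ≠ 0)
    (hid : derivative F * q - F * derivative q = pp * G) :
    Multiset.card (F.roots.filter (· ∈ Set.Ioo a b)) ≤
      1 + Multiset.card (G.roots.filter (· ∈ Set.Ioo a b)) := by
  have hmid : (a + b) / 2 ∈ Set.Ioo a b := ⟨by linarith, by linarith⟩
  rcases eq_or_ne F 0 with hF | hF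
  · simp [hF]
  rcases eq_or_ne G 0 with hG | hG
  · -- If G = 0, then F has no root in Ioo a b at all.
    have hnoroot : ∀ x ∈ Set.Ioo a b, F.eval x ≠ 0 := by
      intro x hx hFx
      have hid' : derivative F * q = F * derivative q := by
        have := hid; rw [hG, mul_zero, sub_eq_zero] at this; exact this
      have hF' : derivative F ≠ 0 := by
        intro h
        have : F = C (F.coeff 0) := eq_C_of_derivative_eq_zero h
        rw [this] at hFx
        simp at hFx
        rw [this, hFx] at hF
        simp at hF
      have hq0 : q ≠ 0 := fun h => hq _ hmid (by simp [h])
      have hq' : derivative q ≠ 0 := by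
        intro h
        rw [h, mul_zero] at hid'
        exact (mul_ne_zero hF' hq0) hid'
      have hm : 1 ≤ rootMultiplicity x F := (rootMultiplicity_pos hF).mpr hFx
      have e1 : rootMultiplicity x (derivative F * q) =
          rootMultiplicity x F - 1 := by
        rw [rootMultiplicity_mul (mul_ne_zero hF' hq0),
          derivative_rootMultiplicity_of_root hFx,
          rootMultiplicity_eq_zero (fun h => hq x hx h), add_zero]
      have e2 : rootMultiplicity x F ≤ rootMultiplicity x (F * derivative q) := by
        rw [rootMultiplicity_mul (mul_ne_zero hF hq')]
        exact Nat.le_add_right _ _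
      rw [← hid', e1] at e2
      omega
    have h0 : F.roots.filter (· ∈ Set.Ioo a b) = 0 := by
      rw [Multiset.filter_eq_nil]
      intro x hx hxmem
      exact hnoroot x hxmem ((mem_roots hF).mp hx)
    rw [h0]
    simp
  -- Main case : F ≠ 0, G ≠ 0.
  set R := F.roots.filter (· ∈ Set.Ioo a b) with hR
  set T := G.roots.filter (· ∈ Set.Ioo a b) with hT
  set S := R.toFinset with hS
  have hmemS : ∀ x ∈ S, F.eval x = 0 ∧ x ∈ Set.Ioo a b := by
    intro x hx
    rw [hS, Multiset.mem_toFinset, hR, Multiset.mem_filter] at hx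
    exact ⟨((mem_roots hF).mp hx.1), hx.2⟩
  have hcountR : ∀ x ∈ S, R.count x = rootMultiplicity x F := by
    intro x hx
    rw [hR, Multiset.count_filter, if_pos (hmemS x hx).2, count_roots]
  have hcountT : ∀ x ∈ Set.Ioo a b, T.count x = rootMultiplicity x G := by
    intro x hx
    rw [hT, Multiset.count_filter, if_pos hx, count_roots]
  -- interleaving bound
  have hinter : S.card ≤ (T.toFinset \ S).card + 1 := by
    refine Finset.card_le_diff_of_interleaved fun x hx y hy hxy _ => ?_
    obtain ⟨hFx, hxab⟩ := hmemS x hx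
    obtain ⟨hFy, hyab⟩ := hmemS y hy
    obtain ⟨z, hz, hGz⟩ := aux_rolle F G q pp hq hpp hid hxab hyab hxy hFx hFy
    have hzab : z ∈ Set.Ioo a b := ⟨lt_trans hxab.1 hz.1, lt_trans hz.2 hyab.2⟩
    refine ⟨z, ?_, hz.1, hz.2⟩
    rw [Multiset.mem_toFinset, hT, Multiset.mem_filter]
    exact ⟨(mem_roots hG).mpr hGz, hzab⟩
  calc
    Multiset.card R = ∑ x ∈ S, R.count x := (Multiset.toFinset_sum_count_eq _).symm
    _ = ∑ x ∈ S, (R.count x - 1 + 1) :=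
      (Eq.symm <| Finset.sum_congr rfl fun x hx => tsub_add_cancel_of_le <|
        Nat.succ_le_iff.2 <| Multiset.count_pos.2 <| Multiset.mem_toFinset.1 hx)
    _ = (∑ x ∈ S, (R.count x - 1)) + S.card := by
      simp only [Finset.sum_add_distrib, Finset.card_eq_sum_ones]
    _ ≤ (∑ x ∈ S, T.count x) + ((T.toFinset \ S).card + 1) := by
      refine add_le_add (Finset.sum_le_sum fun x hx => ?_) hinter
      rw [hcountR x hx, hcountT x (hmemS x hx).2]
      exact aux_rootMult F G q pp hid (hpp x (hmemS x hx).2) hG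
    _ ≤ (∑ x ∈ S, T.count x) +
          ((∑ x ∈ T.toFinset \ S, T.count x) + 1) := by
      refine add_le_add_right (add_le_add_left ((Finset.card_eq_sum_ones _).trans_le ?_) _) _
      refine Finset.sum_le_sum fun x hx => Nat.succ_le_iff.2 ?_
      rw [Multiset.count_pos, ← Multiset.mem_toFinset]
      exact (Finset.mem_sdiff.1 hx).1
    _ = Multiset.card T + 1 := by
      rw [← add_assoc, ← Finset.sum_union Finset.disjoint_sdiff,
        Finset.union_sdiff_self_eq_union, ← Multiset.toFinset_sum_count_eq,
        ← Finset.sum_subset Finset.subset_union_right]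
      intro x _ hx₂
      simpa only [Multiset.mem_toFinset, Multiset.count_eq_zero] using hx₂
    _ = 1 + Multiset.card T := by omega

theorem ZQ_le_one_add_ZQ1 (p : Polynomial ℝ) (a b : ℝ) (hab : a < b)
    (hne : ∀ z ∈ Set.Ioo a b, p.eval z ≠ 0 ∧ (derivative p).eval z ≠ 0 ∧
      (derivative (derivative p)).eval z ≠ 0) :
    ZQ p (Set.Ioo a b) ≤ 1 + ZQ (derivative p) (Set.Ioo a b) := by
  have hid : derivative (Fq p) * derivative p - Fq p * derivative (derivative p)
      = p * Fq (derivative p) := by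
    simp only [Fq, derivative_sub, derivative_mul, derivative_pow, C_eq_natCast,
      Nat.cast_ofNat, map_ofNat]
    ring
  have key := aux_count (Fq p) (Fq (derivative p)) (derivative p) p hab
    (fun t ht => (hne t ht).2.1) (fun t ht => (hne t ht).1) hid
  have e1 : ZQ p (Set.Ioo a b)
      = Multiset.card ((Fq p).roots.filter (· ∈ Set.Ioo a b)) := by
    rw [ZQ]
    congr 1
    have h := Multiset.filter_congr (s := (Fq p).roots)
      (p := fun x => p.eval x ≠ 0 ∧ x ∈ Set.Ioo a b) (q := (· ∈ Set.Ioo a b))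
      (fun x _ => ⟨fun h => h.2, fun h => ⟨(hne x h).1, h⟩⟩)
    convert h using 2
  have e2 : ZQ (derivative p) (Set.Ioo a b)
      = Multiset.card ((Fq (derivative p)).roots.filter (· ∈ Set.Ioo a b)) := by
    rw [ZQ]
    congr 1
    have h := Multiset.filter_congr (s := (Fq (derivative p)).roots)
      (p := fun x => (derivative p).eval x ≠ 0 ∧ x ∈ Set.Ioo a b)
      (q := (· ∈ Set.Ioo a b))
      (fun x _ => ⟨fun h => h.2, fun h => ⟨(hne x h).2.1, h⟩⟩)
    convert h using 2
  rw [e1, e2]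
  exact key
end
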